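/- arXiv:2204.08153 — 12 statements merged into one kernel-verified Lean document; each statement's English description precedes it below -/
import Mathlib

section
/- Let n ≥ 1, d ∈ ℝ^n and b > 0, and let v* be the unique Euclidean projection of d onto the scaled standard simplex Δ_b, i.e. the unique minimizer of ‖v − d‖_2 over v ∈ Δ_b. Then there exists a unique τ ∈ ℝ such that v*_i = max(d_i − τ, 0) for every i = 1,…,n. -/
/-- Let `n ≥ 1`, `d ∈ ℝ^n` and `b > 0`, and let `v` be the (unique) Euclidean
projection of `d` onto the scaled standard simplex `Δ_b`, i.e. a minimizer of `‖w − d‖₂` over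
`w ∈ Δ_b`. Then there exists a unique `τ ∈ ℝ` such that `v i = max (d i − τ) 0` for all `i`. -/
theorem simplex_projection_pivot_existsUnique
    (n : ℕ) (hn : 1 ≤ n) (b : ℝ) (hb : 0 < b)
    (d v : EuclideanSpace ℝ (Fin n))
    (hmem : (∑ i, v i) = b ∧ ∀ i, 0 ≤ v i)
    (hmin : ∀ w : EuclideanSpace ℝ (Fin n),
      ((∑ i, w i) = b ∧ ∀ i, 0 ≤ w i) → ‖v - d‖ ≤ ‖w - d‖) :
    ∃! τ : ℝ, ∀ i, v i = max (d i - τ) 0 := by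
  have hne : Nonempty (Fin n) := ⟨⟨0, hn⟩⟩
  -- the function g
  set g : ℝ → ℝ := fun τ => ∑ i, max (d i - τ) 0 with hg
  have hgc : Continuous g := by
    apply continuous_finset_sum
    intro i _
    exact (continuous_const.sub continuous_id).max continuous_const
  -- a maximal coordinate
  obtain ⟨i0, _, hi0⟩ := Finset.exists_max_image (Finset.univ : Finset (Fin n))
    (fun i => d i) ⟨⟨0, hn⟩, Finset.mem_univ _⟩
  set M := d i0 with hM
  have hgM : g M = 0 := by
    apply Finset.sum_eq_zero
    intro i _
    have := hi0 i (Finset.mem_univ i)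
    simp only [max_eq_right (by linarith : d i - M ≤ 0)]
  have hglow : b ≤ g (M - b) := by
    have h1 : max (d i0 - (M - b)) 0 = b := by
      rw [max_eq_left (by show (0:ℝ) ≤ d i0 - (d i0 - b); linarith)]
      show d i0 - (d i0 - b) = b; ring
    calc b = max (d i0 - (M - b)) 0 := h1.symm
      _ ≤ ∑ i, max (d i - (M - b)) 0 :=
        Finset.single_le_sum (f := fun i => max (d i - (M - b)) 0) (fun i _ => le_max_right _ _) (Finset.mem_univ i0)
      _ = g (M - b) := rfl
  -- IVT on [M - b, M]
  have hsub : Set.Icc (g M) (g (M - b)) ⊆ g '' Set.Icc (M - b) M :=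
    intermediate_value_Icc' (by linarith) hgc.continuousOn
  obtain ⟨τ, _, hτ⟩ := hsub ⟨by linarith [hgM], hglow⟩
  -- candidate vector
  set w : EuclideanSpace ℝ (Fin n) := WithLp.toLp 2 (fun i => max (d i - τ) 0 : Fin n → ℝ) with hw
  have hwsum : (∑ i, w i) = b := hτ
  have hwnn : ∀ i, 0 ≤ w i := fun i => le_max_right _ _
  -- key inner product inequality for feasible u
  have hkey : ∀ u : EuclideanSpace ℝ (Fin n), (∑ i, u i) = b → (∀ i, 0 ≤ u i) →
      0 ≤ @inner ℝ _ _ (u - w) (w - d) := by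
    intro u husum hunn
    have hinner : @inner ℝ _ _ (u - w) (w - d) = ∑ i, (u i - w i) * (w i - d i) := by
      simp [PiLp.inner_apply, RCLike.inner_apply, PiLp.sub_apply, mul_comm]
    rw [hinner]
    have hterm : ∀ i ∈ Finset.univ, (u i - w i) * (-τ) ≤ (u i - w i) * (w i - d i) := by
      intro i _
      rcases le_or_gt (d i - τ) 0 with h | h
      · have hwi : w i = 0 := max_eq_right h
        rw [hwi]
        have : -τ ≤ -d i := by linarith
        nlinarith [hunn i]
      · have hwi : w i = d i - τ := max_eq_left h.le
        rw [hwi]; apply le_of_eq; ring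
    calc (0:ℝ) = ∑ i, (u i - w i) * (-τ) := by
          rw [← Finset.sum_mul, Finset.sum_sub_distrib, husum, hwsum]; ring
      _ ≤ ∑ i, (u i - w i) * (w i - d i) := Finset.sum_le_sum hterm
  -- v = w
  have hvd : ‖v - d‖ ≤ ‖w - d‖ := hmin w ⟨hwsum, hwnn⟩
  have hexp : ‖v - d‖^2 = ‖v - w‖^2 + 2 * @inner ℝ _ _ (v - w) (w - d) + ‖w - d‖^2 := by
    have : v - d = (v - w) + (w - d) := by abel
    rw [this, @norm_add_sq_real]
  have hinn : 0 ≤ @inner ℝ _ _ (v - w) (w - d) := hkey v hmem.1 hmem.2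
  have hvw : v = w := by
    have h1 : ‖v - d‖^2 ≤ ‖w - d‖^2 := by
      apply sq_le_sq' <;> [linarith [norm_nonneg (v - d), norm_nonneg (w - d)]; exact hvd]
    have h2 : ‖v - w‖^2 ≤ 0 := by nlinarith
    have h3 : ‖v - w‖ = 0 := by nlinarith [norm_nonneg (v - w)]
    have := norm_sub_eq_zero_iff.mp h3
    exact this
  refine ⟨τ, fun i => by rw [hvw], ?_⟩
  -- uniqueness
  intro τ' hτ'
  have hvτ : ∀ i, v i = max (d i - τ) 0 := fun i => by rw [hvw]
  have hpos : ∃ i, 0 < v i := by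
    by_contra h
    push_neg at h
    have : (∑ i, v i) = 0 := Finset.sum_eq_zero fun i _ => le_antisymm (h i) (hmem.2 i)
    rw [hmem.1] at this; linarith
  obtain ⟨i, hi⟩ := hpos
  have h1 : v i = d i - τ' := by
    have := hτ' i
    rcases max_cases (d i - τ') 0 with ⟨h, _⟩ | ⟨h, _⟩
    · rw [this]; exact h
    · rw [this, h] at hi; exact absurd hi (lt_irrefl 0)
  have h2 : v i = d i - τ := by
    have := hvτ i
    rcases max_cases (d i - τ) 0 with ⟨h, _⟩ | ⟨h, _⟩
    · rw [this]; exact h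
    · rw [this, h] at hi; exact absurd hi (lt_irrefl 0)
  linarith
end

section
/- Let n ≥ 1, d ∈ ℝ^n, b > 0, and define g : ℝ → ℝ by g(t) = Σ_{i=1}^n max(d_i − t, 0) − b. Then g is strictly decreasing on the interval (−∞, max_i d_i], g(t) = −b for all t ≥ max_i d_i, and the pivot τ of the projection of d onto Δ_b is the unique real number satisfying g(τ) = 0; in particular τ < max_i d_i. -/
/-- For `n ≥ 1`, `d ∈ ℝ^n`, `b > 0`, let `g t = ∑ i, max (d i − t) 0 − b` and
let `M = max_i d i`. Then `g` is strictly decreasing on `(−∞, M]`, `g t = −b` for `t ≥ M`, and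
the pivot `τ` of the projection of `d` onto `Δ_b` is the unique real root of `g`;
in particular `τ < M`. -/
theorem simplex_projection_pivot_root
    (n : ℕ) (hn : 1 ≤ n) (b : ℝ) (hb : 0 < b)
    (d v : EuclideanSpace ℝ (Fin n))
    (hmem : (∑ i, v i) = b ∧ ∀ i, 0 ≤ v i)
    (hmin : ∀ w : EuclideanSpace ℝ (Fin n),
      ((∑ i, w i) = b ∧ ∀ i, 0 ≤ w i) → ‖v - d‖ ≤ ‖w - d‖)
    (τ : ℝ) (hτ : ∀ i, v i = max (d i - τ) 0)
    (M : ℝ) (hM : IsGreatest (Set.range fun i => d i) M)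
    (g : ℝ → ℝ) (hg : ∀ t, g t = (∑ i, max (d i - t) 0) - b) :
    StrictAntiOn g (Set.Iic M) ∧ (∀ t, M ≤ t → g t = -b) ∧
      g τ = 0 ∧ (∀ t, g t = 0 → t = τ) ∧ τ < M := by
  obtain ⟨i₀, hi₀⟩ := hM.1
  have hanti : StrictAntiOn g (Set.Iic M) := by
    intro s hs t ht hst
    rw [hg, hg]
    have hle : ∀ i ∈ Finset.univ, max (d i - t) 0 ≤ max (d i - s) 0 := by
      intro i _
      exact max_le_max (by linarith) le_rfl
    have hlt : max (d i₀ - t) 0 < max (d i₀ - s) 0 := by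
      have h1 : max (d i₀ - t) 0 = d i₀ - t := by
        have hdM : d i₀ = M := hi₀
        rw [max_eq_left]
        have := Set.mem_Iic.mp ht
        linarith
      have h2 : d i₀ - s ≤ max (d i₀ - s) 0 := le_max_left _ _
      rw [h1]; linarith
    have := Finset.sum_lt_sum hle ⟨i₀, Finset.mem_univ _, hlt⟩
    linarith
  have hright : ∀ t, M ≤ t → g t = -b := by
    intro t ht
    rw [hg]
    have : (∑ i, max (d i - t) 0) = 0 := by
      apply Finset.sum_eq_zero
      intro i _
      have := hM.2 ⟨i, rfl⟩
      exact max_eq_right (by linarith)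
    rw [this]; ring
  have hgτ : g τ = 0 := by
    rw [hg]
    have : (∑ i, max (d i - τ) 0) = ∑ i, v i := by
      exact Finset.sum_congr rfl fun i _ => (hτ i).symm
    rw [this, hmem.1]; ring
  have hroot_lt : ∀ t, g t = 0 → t < M := by
    intro t ht
    by_contra h
    push_neg at h
    have := hright t h
    rw [ht] at this
    linarith
  have hτM : τ < M := hroot_lt τ hgτ
  refine ⟨hanti, hright, hgτ, ?_, hτM⟩
  intro t ht
  have htM : t < M := hroot_lt t ht
  rcases lt_trichotomy t τ with h | h | h
  · have := hanti (le_of_lt htM) (le_of_lt hτM) h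
    rw [ht, hgτ] at this; linarith
  · exact h
  · have := hanti (le_of_lt hτM) (le_of_lt htM) h
    rw [ht, hgτ] at this; linarith
end

section
/- Let n ≥ 1, d ∈ ℝ^n, b > 0, let τ be the pivot of the projection of d onto Δ_b, and define f : ℝ → ℝ by f(t) = (Σ_{i ∈ I_t} d_i − b)/|I_t| − t if t < max_i d_i, and f(t) = −b if t ≥ max_i d_i. Then for all t₁, t₂ ∈ ℝ with t₁ < τ < t₂ one has f(t₁) > f(τ) = 0 > f(t₂). -/
open Finset in
/-- For `n ≥ 1`, `d ∈ ℝ^n`, `b > 0`, let `τ` be the pivot of the projection of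
`d` onto `Δ_b`, and let `f t = (∑_{i ∈ I_t} d i − b)/|I_t| − t` for `t < M := max_i d i` and
`f t = −b` for `t ≥ M`, where `I_t = {i : d i > t}`. Then for all `t₁ < τ < t₂`,
`f t₁ > f τ = 0 > f t₂`. -/
theorem simplex_projection_f_sign
    (n : ℕ) (hn : 1 ≤ n) (b : ℝ) (hb : 0 < b)
    (d v : EuclideanSpace ℝ (Fin n))
    (hmem : (∑ i, v i) = b ∧ ∀ i, 0 ≤ v i)
    (hmin : ∀ w : EuclideanSpace ℝ (Fin n),
      ((∑ i, w i) = b ∧ ∀ i, 0 ≤ w i) → ‖v - d‖ ≤ ‖w - d‖)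
    (τ : ℝ) (hτ : ∀ i, v i = max (d i - τ) 0)
    (M : ℝ) (hM : IsGreatest (Set.range fun i => d i) M)
    (f : ℝ → ℝ)
    (hf₁ : ∀ t, t < M → f t =
      ((∑ i ∈ univ.filter (fun i => t < d i), d i) - b) /
        ((univ.filter (fun i => t < d i)).card : ℝ) - t)
    (hf₂ : ∀ t, M ≤ t → f t = -b) :
    ∀ t₁ t₂ : ℝ, t₁ < τ → τ < t₂ → f t₁ > 0 ∧ f τ = 0 ∧ 0 > f t₂ := by
  obtain ⟨hsum, hnn⟩ := hmem
  set S : ℝ → Finset (Fin n) := fun t => univ.filter (fun i => t < d i) with hS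
  -- sum over S t of (d i - t) equals sum of max
  have key : ∀ t : ℝ, (∑ i ∈ S t, (d i - t)) = ∑ i, max (d i - t) 0 := by
    intro t
    rw [hS]
    rw [Finset.sum_filter]
    apply Finset.sum_congr rfl
    intro i _
    by_cases h : t < d i
    · simp [h, max_eq_left (by linarith : (0:ℝ) ≤ d i - t)]
    · simp [h, max_eq_right (by push_neg at h; linarith : d i - t ≤ (0:ℝ))]
  have hbτ : (∑ i ∈ S τ, (d i - τ)) = b := by
    rw [key, ← hsum]
    exact Finset.sum_congr rfl fun i _ => (hτ i).symm
  have hSτne : (S τ).Nonempty := by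
    by_contra h
    rw [Finset.not_nonempty_iff_eq_empty] at h
    rw [h, Finset.sum_empty] at hbτ
    linarith
  have hτM : τ < M := by
    obtain ⟨i, hi⟩ := hSτne
    have h1 : τ < d i := by simpa [hS] using hi
    have h2 : d i ≤ M := hM.2 ⟨i, rfl⟩
    linarith
  have cardpos : ∀ t : ℝ, (S t).Nonempty → (0:ℝ) < ((S t).card : ℝ) := by
    intro t ht
    exact_mod_cast Finset.card_pos.mpr ht
  -- sum splitting: ∑ i ∈ S t, (d i - t) = (∑ i ∈ S t, d i) - card * t
  have split : ∀ t : ℝ, (∑ i ∈ S t, (d i - t)) = (∑ i ∈ S t, d i) - ((S t).card : ℝ) * t := by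
    intro t
    rw [Finset.sum_sub_distrib, Finset.sum_const, nsmul_eq_mul]
  have hfτ : f τ = 0 := by
    rw [hf₁ τ hτM]
    have hc := cardpos τ hSτne
    have : (∑ i ∈ S τ, d i) - b = ((S τ).card : ℝ) * τ := by
      have := split τ
      rw [hbτ] at this
      linarith
    rw [hS] at *
    field_simp
    linarith
  intro t₁ t₂ ht₁ ht₂
  refine ⟨?_, hfτ, ?_⟩
  · -- t₁ < τ : f t₁ > 0
    have ht₁M : t₁ < M := lt_trans ht₁ hτM
    have hsub : S τ ⊆ S t₁ := by
      intro i hi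
      simp only [hS, Finset.mem_filter, Finset.mem_univ, true_and] at hi ⊢
      linarith
    have h1 : (∑ i ∈ S τ, (d i - t₁)) ≤ ∑ i ∈ S t₁, (d i - t₁) := by
      apply Finset.sum_le_sum_of_subset_of_nonneg hsub
      intro i hi _
      simp only [hS, Finset.mem_filter, Finset.mem_univ, true_and] at hi
      linarith
    have h2 : (∑ i ∈ S τ, (d i - t₁)) = (∑ i ∈ S τ, (d i - τ)) + ((S τ).card : ℝ) * (τ - t₁) := by
      rw [Finset.sum_congr rfl (fun i _ => by ring : ∀ i ∈ S τ, d i - t₁ = (d i - τ) + (τ - t₁)),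
        Finset.sum_add_distrib, Finset.sum_const, nsmul_eq_mul]
    have hcτ := cardpos τ hSτne
    have hgt : b < ∑ i ∈ S t₁, (d i - t₁) := by
      rw [h2, hbτ] at h1
      nlinarith
    have hSt₁ne : (S t₁).Nonempty := hSτne.mono hsub
    have hc := cardpos t₁ hSt₁ne
    rw [hf₁ t₁ ht₁M]
    rw [split t₁] at hgt
    rw [gt_iff_lt, sub_pos, lt_div_iff₀ hc]
    linarith
  · -- τ < t₂ : f t₂ < 0
    by_cases h : M ≤ t₂
    · rw [hf₂ t₂ h]; linarith
    · push_neg at h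
      have hSt₂ne : (S t₂).Nonempty := by
        obtain ⟨i, hi⟩ := hM.1
        have hdi : d i = M := hi
        exact ⟨i, by simp only [hS, Finset.mem_filter, Finset.mem_univ, true_and]; linarith⟩
      have hsub : S t₂ ⊆ S τ := by
        intro i hi
        simp only [hS, Finset.mem_filter, Finset.mem_univ, true_and] at hi ⊢
        linarith
      have h1 : (∑ i ∈ S t₂, (d i - τ)) ≤ ∑ i ∈ S τ, (d i - τ) := by
        apply Finset.sum_le_sum_of_subset_of_nonneg hsub
        intro i hi _
        simp only [hS, Finset.mem_filter, Finset.mem_univ, true_and] at hi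
        linarith
      have h2 : (∑ i ∈ S t₂, (d i - t₂)) = (∑ i ∈ S t₂, (d i - τ)) - ((S t₂).card : ℝ) * (t₂ - τ) := by
        rw [Finset.sum_congr rfl (fun i _ => by ring : ∀ i ∈ S t₂, d i - t₂ = (d i - τ) - (t₂ - τ)),
          Finset.sum_sub_distrib, Finset.sum_const, nsmul_eq_mul]
      have hc := cardpos t₂ hSt₂ne
      have hlt : (∑ i ∈ S t₂, (d i - t₂)) < b := by
        rw [h2]
        rw [hbτ] at h1
        nlinarith
      rw [hf₁ t₂ h]
      rw [split t₂] at hlt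
      rw [gt_iff_lt, sub_neg, div_lt_iff₀ hc]
      linarith
end

section
/- Let n ≥ 1, d ∈ ℝ^n, b > 0, and let π be a permutation of {1,…,n} sorting d in non-increasing order, d_{π_1} ≥ d_{π_2} ≥ … ≥ d_{π_n}. The set {j ∈ {1,…,n} : (Σ_{i=1}^j d_{π_i} − b)/j < d_{π_j}} is nonempty (it contains j = 1); let κ be its maximum. Then the pivot τ of the projection of d onto Δ_b equals (Σ_{i=1}^κ d_{π_i} − b)/κ, and the active index set satisfies I_τ = {π_1,…,π_κ}; in particular |I_τ| = κ. -/
open Finset in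
/-- Let `π` be a permutation sorting `d` in non-increasing order. The set of
(1-based) indices `j` with `(∑_{i=1}^j d_{π i} − b)/j < d_{π j}` is nonempty (it contains
`j = 1`, i.e. the 0-based index `0`); if `κ` is its maximum (here a 0-based `Fin n` index, so
that the count of selected entries is `κ + 1`), then the pivot `τ` of the projection of `d`
onto `Δ_b` equals `(∑_{i ≤ κ} d_{π i} − b)/(κ + 1)`, and the active index set `I_τ` is the
image under `π` of `{i : i ≤ κ}`; in particular `|I_τ| = κ + 1`. -/
theorem simplex_projection_sort_and_scan
    (n : ℕ) (hn : 1 ≤ n) (b : ℝ) (hb : 0 < b)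
    (d v : EuclideanSpace ℝ (Fin n))
    (hmem : (∑ i, v i) = b ∧ ∀ i, 0 ≤ v i)
    (hmin : ∀ w : EuclideanSpace ℝ (Fin n),
      ((∑ i, w i) = b ∧ ∀ i, 0 ≤ w i) → ‖v - d‖ ≤ ‖w - d‖)
    (τ : ℝ) (hτ : ∀ i, v i = max (d i - τ) 0)
    (π : Equiv.Perm (Fin n))
    (hsort : ∀ i j : Fin n, i ≤ j → d (π j) ≤ d (π i))
    (C : Fin n → Prop)
    (hC : ∀ j : Fin n, C j ↔
      ((∑ i ∈ univ.filter (fun i : Fin n => i ≤ j), d (π i)) - b) / ((j : ℕ) + 1) < d (π j))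
    (κ : Fin n) (hκmem : C κ) (hκmax : ∀ j : Fin n, C j → j ≤ κ) :
    C ⟨0, hn⟩ ∧
      τ = ((∑ i ∈ univ.filter (fun i : Fin n => i ≤ κ), d (π i)) - b) / ((κ : ℕ) + 1) ∧
      univ.filter (fun i : Fin n => τ < d i) =
        (univ.filter (fun i : Fin n => i ≤ κ)).image π ∧
      (univ.filter (fun i : Fin n => τ < d i)).card = (κ : ℕ) + 1 := by
  obtain ⟨hsum, hpos⟩ := hmem
  -- Part 1 : C 0
  have hC0 : C ⟨0, hn⟩ := by
    rw [hC]
    have hfe : univ.filter (fun i : Fin n => i ≤ ⟨0, hn⟩) = {⟨0, hn⟩} := by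
      ext i
      simp only [mem_filter, mem_univ, true_and, mem_singleton]
      constructor
      · intro h
        exact le_antisymm h (Fin.mk_le_of_le_val (Nat.zero_le _))
      · intro h; exact le_of_eq h
    rw [hfe]
    simp only [sum_singleton, Nat.cast_zero, zero_add, div_one]
    linarith
  -- Active set in sorted coordinates
  set A : Finset (Fin n) := univ.filter (fun i => τ < d (π i)) with hA
  have hAne : A.Nonempty := by
    by_contra hne
    rw [Finset.not_nonempty_iff_eq_empty] at hne
    have hzero : ∀ i : Fin n, v i = 0 := by
      intro i
      have h1 : ¬ τ < d (π (π.symm i)) := by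
        intro h
        have : π.symm i ∈ A := by simpa [hA] using h
        simp [hne] at this
      rw [Equiv.apply_symm_apply] at h1
      rw [hτ i, max_eq_right (by linarith [not_lt.mp h1])]
    rw [Finset.sum_congr rfl (fun i _ => hzero i)] at hsum
    simp at hsum
    linarith
  set m : Fin n := A.max' hAne with hm
  have hmA : m ∈ A := A.max'_mem hAne
  have hmτ : τ < d (π m) := by
    have := hmA; rw [hA, mem_filter] at this; exact this.2
  have hAeq : A = univ.filter (fun i => i ≤ m) := by
    ext i
    simp only [hA, mem_filter, mem_univ, true_and]
    constructor
    · intro h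
      exact A.le_max' i (by rw [hA, mem_filter]; exact ⟨mem_univ i, h⟩)
    · intro h
      exact lt_of_lt_of_le hmτ (hsort i m h)
  have hfIic : ∀ j : Fin n, univ.filter (fun i : Fin n => i ≤ j) = Finset.Iic j := by
    intro j; ext i; simp
  have hcardA : A.card = (m : ℕ) + 1 := by
    rw [hAeq, hfIic, Fin.card_Iic]
  -- Active set in original coordinates
  have himg : univ.filter (fun i : Fin n => τ < d i) = A.image π := by
    ext i
    simp only [mem_filter, mem_univ, true_and, mem_image, hA]
    constructor
    · intro h
      exact ⟨π.symm i, by rw [Equiv.apply_symm_apply]; exact h, by simp⟩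
    · rintro ⟨a, ha, rfl⟩
      exact ha
  -- Sum identity
  have hsum2 : (∑ i ∈ A, d (π i)) - ((m : ℕ) + 1) * τ = b := by
    have h1 : (∑ i, v i) = ∑ i ∈ univ.filter (fun i : Fin n => τ < d i), (d i - τ) := by
      rw [← Finset.sum_filter_add_sum_filter_not univ (fun i => τ < d i) (fun i => v i)]
      have e2 : ∑ i ∈ univ.filter (fun i : Fin n => ¬ τ < d i), v i = 0 :=
        Finset.sum_eq_zero fun i hi => by
          have := (mem_filter.mp hi).2
          rw [hτ i, max_eq_right (by linarith [not_lt.mp this])]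
      rw [e2, add_zero]
      refine Finset.sum_congr rfl fun i hi => ?_
      have := (mem_filter.mp hi).2
      rw [hτ i, max_eq_left (by linarith)]
    rw [hsum, himg, Finset.sum_image (fun a _ c _ h => π.injective h)] at h1
    rw [Finset.sum_sub_distrib, Finset.sum_const, hcardA, nsmul_eq_mul] at h1
    push_cast at h1 ⊢
    linarith
  have hmpos : (0:ℝ) < (m : ℕ) + 1 := by positivity
  have hτm : τ = ((∑ i ∈ univ.filter (fun i : Fin n => i ≤ m), d (π i)) - b) / ((m : ℕ) + 1) := by
    rw [← hAeq]
    field_simp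
    linarith
  -- C m holds
  have hCm : C m := by
    rw [hC, ← hτm]
    exact hmτ
  have hmκ : m ≤ κ := hκmax m hCm
  -- κ ≤ m
  have hκm : κ ≤ m := by
    by_contra hlt
    push_neg at hlt
    have hκA : κ ∉ A := fun h => absurd (A.le_max' κ h) (not_le.mpr hlt)
    have hdκ : d (π κ) ≤ τ := by
      by_contra h
      exact hκA (by rw [hA, mem_filter]; exact ⟨mem_univ κ, not_le.mp h⟩)
    have hCκ := (hC κ).mp hκmem
    rw [div_lt_iff₀ (by positivity)] at hCκ
    -- split the sum
    have hsplit : Finset.Iic κ = Finset.Iic m ∪ Finset.Ioc m κ := by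
      ext a
      simp only [Finset.mem_union, Finset.mem_Iic, Finset.mem_Ioc]
      constructor
      · intro h
        rcases le_or_gt a m with h' | h'
        · exact Or.inl h'
        · exact Or.inr ⟨h', h⟩
      · rintro (h | ⟨_, h⟩)
        · exact le_trans h hmκ
        · exact h
    have hdisj : Disjoint (Finset.Iic m) (Finset.Ioc m κ) := by
      rw [Finset.disjoint_left]
      intro a ha hb
      exact absurd (Finset.mem_Iic.mp ha) (not_le.mpr (Finset.mem_Ioc.mp hb).1)
    have hsumκ : ∑ i ∈ univ.filter (fun i : Fin n => i ≤ κ), d (π i)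
        = (∑ i ∈ Finset.Iic m, d (π i)) + ∑ i ∈ Finset.Ioc m κ, d (π i) := by
      rw [hfIic, hsplit, Finset.sum_union hdisj]
    have hbound : ((κ : ℕ) - (m : ℕ) : ℕ) * d (π κ) ≤ ∑ i ∈ Finset.Ioc m κ, d (π i) := by
      have := Finset.card_nsmul_le_sum (Finset.Ioc m κ) (fun i => d (π i)) (d (π κ))
        (fun i hi => hsort i κ (Finset.mem_Ioc.mp hi).2)
      rw [Fin.card_Ioc, nsmul_eq_mul] at this
      exact this
    have hSm : (∑ i ∈ Finset.Iic m, d (π i)) = b + ((m : ℕ) + 1) * τ := by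
      rw [← hfIic, ← hAeq]; linarith
    rw [hsumκ, hSm] at hCκ
    have hcast : (((κ : ℕ) - (m : ℕ) : ℕ) : ℝ) = ((κ : ℕ) : ℝ) - ((m : ℕ) : ℝ) := by
      have : (m : ℕ) ≤ (κ : ℕ) := hmκ
      push_cast [Nat.cast_sub this]
      ring
    rw [hcast] at hbound
    nlinarith [hbound, hdκ, hCκ]
  have hκeq : κ = m := le_antisymm hκm hmκ
  subst hκeq
  refine ⟨hC0, hτm, ?_, ?_⟩
  · rw [himg, hAeq]
  · rw [himg, Finset.card_image_of_injective _ π.injective, hcardA]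
end

section
/- Let n ≥ 1, d ∈ ℝ^n, b > 0, and let τ be the pivot of the projection of d onto Δ_b. Then for every subset S ⊆ {1,…,n} with I_τ ⊆ S (such S is automatically nonempty since b > 0 forces I_τ ≠ ∅), one has (Σ_{i ∈ S} d_i − b)/|S| ≤ τ. In particular (Σ_{i=1}^n d_i − b)/n ≤ τ. -/
open Finset in
/-- Let `τ` be the pivot of the projection of `d` onto `Δ_b`. Then the active
set `I_τ = {i : d i > τ}` is nonempty, for every `S ⊇ I_τ` one has
`(∑_{i ∈ S} d i − b)/|S| ≤ τ`, and in particular `(∑ i d i − b)/n ≤ τ`. -/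
theorem simplex_projection_pivot_lower_bound
    (n : ℕ) (hn : 1 ≤ n) (b : ℝ) (hb : 0 < b)
    (d v : EuclideanSpace ℝ (Fin n))
    (hmem : (∑ i, v i) = b ∧ ∀ i, 0 ≤ v i)
    (hmin : ∀ w : EuclideanSpace ℝ (Fin n),
      ((∑ i, w i) = b ∧ ∀ i, 0 ≤ w i) → ‖v - d‖ ≤ ‖w - d‖)
    (τ : ℝ) (hτ : ∀ i, v i = max (d i - τ) 0) :
    (univ.filter (fun i : Fin n => τ < d i)).Nonempty ∧
      (∀ S : Finset (Fin n), univ.filter (fun i : Fin n => τ < d i) ⊆ S →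
        ((∑ i ∈ S, d i) - b) / (S.card : ℝ) ≤ τ) ∧
      ((∑ i, d i) - b) / (n : ℝ) ≤ τ := by
  obtain ⟨hsum, hpos⟩ := hmem
  set I := univ.filter (fun i : Fin n => τ < d i) with hIdef
  -- v vanishes off I
  have hvI : ∀ i, i ∉ I → v i = 0 := by
    intro i hi
    simp only [hIdef, mem_filter, mem_univ, true_and, not_lt] at hi
    rw [hτ i, max_eq_right (by linarith)]
  have hvI' : ∀ i ∈ I, v i = d i - τ := by
    intro i hi
    simp only [hIdef, mem_filter, mem_univ, true_and] at hi
    rw [hτ i, max_eq_left (by linarith)]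
  have hsumI : ∑ i ∈ I, (d i - τ) = b := by
    rw [← hsum, ← sum_subset (subset_univ I) (fun i _ hi => hvI i hi)]
    exact sum_congr rfl fun i hi => (hvI' i hi).symm
  have hIne : I.Nonempty := by
    rcases I.eq_empty_or_nonempty with h | h
    · rw [h, sum_empty] at hsumI; linarith
    · exact h
  refine ⟨hIne, ?_, ?_⟩
  · intro S hS
    have hScard : 0 < (S.card : ℝ) := by
      have := card_pos.mpr (hIne.mono hS)
      exact_mod_cast this
    rw [div_le_iff₀ hScard]
    have hle : ∑ i ∈ S, (d i - τ) ≤ b := by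
      rw [← hsumI, ← sum_sdiff hS]
      have : ∑ i ∈ S \ I, (d i - τ) ≤ 0 := by
        apply sum_nonpos
        intro i hi
        rcases mem_sdiff.mp hi with ⟨_, hiI⟩
        simp only [hIdef, mem_filter, mem_univ, true_and, not_lt] at hiI
        linarith
      linarith
    rw [sum_sub_distrib, sum_const, nsmul_eq_mul] at hle
    linarith [hle]
  · have hIuniv : I ⊆ univ := subset_univ I
    have := by
      have hScard : 0 < ((univ : Finset (Fin n)).card : ℝ) := by
        simp [card_univ]; omega
      exact hScard
    have key : ((∑ i ∈ (univ : Finset (Fin n)), d i) - b) / ((univ : Finset (Fin n)).card : ℝ) ≤ τ := by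
      rw [div_le_iff₀ this]
      have hle : ∑ i ∈ (univ : Finset (Fin n)), (d i - τ) ≤ b := by
        rw [← hsumI, ← sum_sdiff hIuniv]
        have : ∑ i ∈ univ \ I, (d i - τ) ≤ 0 := by
          apply sum_nonpos
          intro i hi
          rcases mem_sdiff.mp hi with ⟨_, hiI⟩
          simp only [hIdef, mem_filter, mem_univ, true_and, not_lt] at hiI
          linarith
        linarith
      rw [sum_sub_distrib, sum_const, nsmul_eq_mul] at hle
      linarith [hle]
    simpa [card_univ] using key
end

section
/- Let n ≥ 1, d ∈ ℝ^n, b ∈ ℝ, and let S′ ⊆ S ⊆ {1,…,n} with S′ nonempty. Define p′ = (Σ_{i ∈ S′} d_i − b)/|S′| and p = (Σ_{i ∈ S} d_i − b)/|S|. If d_j ≤ p′ for every j ∈ S \ S′, then p′ − p = (Σ_{j ∈ S \ S′} (p′ − d_j))/|S| ≥ 0; in particular p′ ≥ p. -/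
open Finset in
/-- For `S′ ⊆ S ⊆ {1,…,n}` with `S′` nonempty, let
`p′ = (∑_{i ∈ S′} d i − b)/|S′|` and `p = (∑_{i ∈ S} d i − b)/|S|`. If `d j ≤ p′` for all
`j ∈ S \ S′`, then `p′ − p = (∑_{j ∈ S \ S′} (p′ − d j))/|S| ≥ 0`; in particular `p′ ≥ p`. -/
theorem pivot_candidate_monotone
    (n : ℕ) (hn : 1 ≤ n) (d : Fin n → ℝ) (b : ℝ)
    (S' S : Finset (Fin n)) (hS' : S'.Nonempty) (hsub : S' ⊆ S)
    (p' p : ℝ)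
    (hp' : p' = ((∑ i ∈ S', d i) - b) / (S'.card : ℝ))
    (hp : p = ((∑ i ∈ S, d i) - b) / (S.card : ℝ))
    (hle : ∀ j ∈ S \ S', d j ≤ p') :
    p' - p = (∑ j ∈ S \ S', (p' - d j)) / (S.card : ℝ) ∧ 0 ≤ p' - p ∧ p ≤ p' := by
  have hc' : (0 : ℝ) < S'.card := by exact_mod_cast Finset.card_pos.mpr hS'
  have hc : (0 : ℝ) < S.card := lt_of_lt_of_le hc' (by exact_mod_cast card_le_card hsub)
  have hkey : (∑ i ∈ S', d i) - b = (S'.card : ℝ) * p' := by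
    rw [hp']; field_simp
  have hsum : ∑ i ∈ S, d i = (∑ i ∈ S', d i) + ∑ i ∈ S \ S', d i := by
    rw [add_comm, Finset.sum_sdiff hsub]
  have hcard : (S.card : ℝ) = (S'.card : ℝ) + ((S \ S').card : ℝ) := by
    rw [Finset.card_sdiff_of_subset hsub]
    have := Finset.card_le_card hsub
    push_cast [Nat.cast_sub this]
    ring
  have hmain : p' - p = (∑ j ∈ S \ S', (p' - d j)) / (S.card : ℝ) := by
    rw [hp, Finset.sum_sub_distrib, Finset.sum_const, nsmul_eq_mul]
    rw [eq_div_iff (ne_of_gt hc), sub_mul, div_mul_cancel₀ _ (ne_of_gt hc)]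
    rw [hsum, hcard]
    linarith [hkey]
  have hnn : 0 ≤ p' - p := by
    rw [hmain]
    apply div_nonneg _ (le_of_lt hc)
    exact Finset.sum_nonneg fun j hj => by linarith [hle j hj]
  exact ⟨hmain, hnn, by linarith⟩
end

section
/- Let n ≥ 1, d ∈ ℝ^n, b > 0, and let τ be the pivot of the projection of d onto Δ_b. Define recursively I^{(0)} = {1,…,n}, p^{(k)} = (Σ_{i ∈ I^{(k)}} d_i − b)/|I^{(k)}|, and I^{(k+1)} = {i ∈ I^{(k)} : d_i > p^{(k)}}. Then for every k: I_τ ⊆ I^{(k+1)} ⊆ I^{(k)} (so each I^{(k)} is nonempty), p^{(k)} ≤ p^{(k+1)} ≤ τ, and whenever I^{(k+1)} = I^{(k)} one has p^{(k)} = τ and I^{(k)} = I_τ; moreover such a k ≤ n exists. -/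
open Finset in
/-- **Michelot's method.** Let `τ` be the pivot of the projection of `d` onto
`Δ_b`. Define `I 0 = {1,…,n}`, `p k = (∑_{i ∈ I k} d i − b)/|I k|`, and
`I (k+1) = {i ∈ I k : d i > p k}`. Then for every `k`: `I_τ ⊆ I (k+1) ⊆ I k` (so each `I k`
is nonempty), `p k ≤ p (k+1) ≤ τ`, and if `I (k+1) = I k` then `p k = τ` and `I k = I_τ`;
moreover some `k ≤ n` with `I (k+1) = I k` exists. -/
theorem michelot_method_correct
    (n : ℕ) (hn : 1 ≤ n) (b : ℝ) (hb : 0 < b)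
    (d v : EuclideanSpace ℝ (Fin n))
    (hmem : (∑ i, v i) = b ∧ ∀ i, 0 ≤ v i)
    (hmin : ∀ w : EuclideanSpace ℝ (Fin n),
      ((∑ i, w i) = b ∧ ∀ i, 0 ≤ w i) → ‖v - d‖ ≤ ‖w - d‖)
    (τ : ℝ) (hτ : ∀ i, v i = max (d i - τ) 0)
    (I : ℕ → Finset (Fin n)) (p : ℕ → ℝ)
    (hI0 : I 0 = univ)
    (hp : ∀ k, p k = ((∑ i ∈ I k, d i) - b) / ((I k).card : ℝ))
    (hIsucc : ∀ k, I (k + 1) = (I k).filter (fun i => p k < d i)) :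
    (∀ k : ℕ,
      (univ.filter (fun i : Fin n => τ < d i) ⊆ I (k + 1) ∧ I (k + 1) ⊆ I k) ∧
      ((I k).Nonempty) ∧
      (p k ≤ p (k + 1) ∧ p (k + 1) ≤ τ) ∧
      (I (k + 1) = I k → p k = τ ∧ I k = univ.filter (fun i : Fin n => τ < d i))) ∧
    ∃ k ≤ n, I (k + 1) = I k := by
  obtain ⟨hsum, hpos⟩ := hmem
  set Iτ : Finset (Fin n) := univ.filter (fun i : Fin n => τ < d i) with hIτdef
  have hmemIτ : ∀ i, i ∈ Iτ ↔ τ < d i := by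
    intro i; simp [hIτdef]
  -- sum over Iτ of (d i - τ) equals b
  have hIτsum : ∑ i ∈ Iτ, (d i - τ) = b := by
    rw [← hsum, hIτdef, Finset.sum_filter]
    refine Finset.sum_congr rfl (fun i _ => ?_)
    rw [hτ i]
    by_cases h : τ < d i
    · simp [h, max_eq_left (by linarith : (0:ℝ) ≤ d i - τ)]
    · simp [h, max_eq_right (by push_neg at h; linarith : d i - τ ≤ (0:ℝ))]
  have hIτne : Iτ.Nonempty := by
    by_contra h
    rw [Finset.not_nonempty_iff_eq_empty] at h
    rw [h, Finset.sum_empty] at hIτsum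
    linarith
  -- key lemma: for nonempty S ⊇ Iτ, the pivot estimate of S is ≤ τ
  have key : ∀ S : Finset (Fin n), Iτ ⊆ S →
      ((∑ i ∈ S, d i) - b) / (S.card : ℝ) ≤ τ := by
    intro S hSub
    have hne : S.Nonempty := hIτne.mono hSub
    have hcard : (0:ℝ) < (S.card : ℝ) := by exact_mod_cast hne.card_pos
    rw [div_le_iff₀ hcard]
    have hsplit : ∑ i ∈ S, (d i - τ) = ∑ i ∈ S \ Iτ, (d i - τ) + ∑ i ∈ Iτ, (d i - τ) :=
      (Finset.sum_sdiff hSub).symm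
    have h1 : ∑ i ∈ S \ Iτ, (d i - τ) ≤ 0 := by
      refine Finset.sum_nonpos (fun i hi => ?_)
      have : ¬ τ < d i := fun hlt => (Finset.mem_sdiff.mp hi).2 ((hmemIτ i).mpr hlt)
      push_neg at this; linarith
    have h2 : ∑ i ∈ S, (d i - τ) ≤ b := by rw [hsplit, hIτsum]; linarith
    have h3 : ∑ i ∈ S, (d i - τ) = (∑ i ∈ S, d i) - (S.card : ℝ) * τ := by
      rw [Finset.sum_sub_distrib, Finset.sum_const, nsmul_eq_mul]
    linarith [h3 ▸ h2]
  -- invariant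
  have inv : ∀ k, Iτ ⊆ I k ∧ p k ≤ τ := by
    intro k
    induction k with
    | zero =>
      refine ⟨hI0 ▸ Finset.subset_univ _, ?_⟩
      rw [hp 0]; exact key _ (hI0 ▸ Finset.subset_univ _)
    | succ k ih =>
      have hsub : Iτ ⊆ I (k + 1) := by
        rw [hIsucc k]
        intro i hi
        exact Finset.mem_filter.mpr ⟨ih.1 hi, lt_of_le_of_lt ih.2 ((hmemIτ i).mp hi)⟩
      exact ⟨hsub, by rw [hp (k+1)]; exact key _ hsub⟩
  have hne : ∀ k, (I k).Nonempty := fun k => hIτne.mono (inv k).1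
  have hcardpos : ∀ k, (0:ℝ) < ((I k).card : ℝ) := fun k => by
    exact_mod_cast (hne k).card_pos
  have hpsum : ∀ k, (∑ i ∈ I k, d i) - b = ((I k).card : ℝ) * p k := by
    intro k
    rw [hp k, mul_div_cancel₀ _ (ne_of_gt (hcardpos k))]
  -- monotonicity p k ≤ p (k+1)
  have mono : ∀ k, p k ≤ p (k + 1) := by
    intro k
    have hsub : I (k + 1) ⊆ I k := by rw [hIsucc k]; exact Finset.filter_subset _ _
    have hsplit : ∑ i ∈ I k, d i = ∑ i ∈ I k \ I (k+1), d i + ∑ i ∈ I (k+1), d i :=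
      (Finset.sum_sdiff hsub).symm
    have h1 : ∑ i ∈ I k \ I (k+1), d i ≤ ((I k \ I (k+1)).card : ℝ) * p k := by
      calc ∑ i ∈ I k \ I (k+1), d i ≤ ∑ _i ∈ I k \ I (k+1), p k := by
            refine Finset.sum_le_sum (fun i hi => ?_)
            obtain ⟨hiI, hiN⟩ := Finset.mem_sdiff.mp hi
            by_contra h
            push_neg at h
            exact hiN (by rw [hIsucc k]; exact Finset.mem_filter.mpr ⟨hiI, lt_of_lt_of_le (by linarith) le_rfl⟩)
        _ = ((I k \ I (k+1)).card : ℝ) * p k := by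
            rw [Finset.sum_const, nsmul_eq_mul]
    have hcards : ((I k \ I (k+1)).card : ℝ) = ((I k).card : ℝ) - ((I (k+1)).card : ℝ) := by
      rw [Finset.card_sdiff_of_subset hsub]
      have := Finset.card_le_card hsub
      push_cast [Nat.cast_sub this]
      ring
    have e1 := hpsum k
    have e2 := hpsum (k+1)
    rw [hcards, sub_mul] at h1
    have hkey : ((I (k+1)).card : ℝ) * p k ≤ ((I (k+1)).card : ℝ) * p (k+1) := by
      linarith
    exact le_of_mul_le_mul_left hkey (hcardpos (k+1))
  -- fixed-point characterization
  have fix : ∀ k, I (k + 1) = I k → p k = τ ∧ I k = Iτ := by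
    intro k hfix
    have hall : ∀ i ∈ I k, p k < d i := by
      intro i hi
      rw [← hfix, hIsucc k] at hi
      exact (Finset.mem_filter.mp hi).2
    have hpk : p k = τ := by
      rcases lt_or_eq_of_le (inv k).2 with hlt | heq
      · exfalso
        -- ∑_{I k} (d i - p k) = b, but splitting over Iτ gives > b
        have hs : ∑ i ∈ I k, (d i - p k) = b := by
          rw [Finset.sum_sub_distrib, Finset.sum_const, nsmul_eq_mul]
          have := hpsum k
          linarith
        have hsplit : ∑ i ∈ I k, (d i - p k)
            = ∑ i ∈ I k \ Iτ, (d i - p k) + ∑ i ∈ Iτ, (d i - p k) :=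
          (Finset.sum_sdiff (inv k).1).symm
        have h1 : 0 ≤ ∑ i ∈ I k \ Iτ, (d i - p k) := by
          refine Finset.sum_nonneg (fun i hi => ?_)
          have := hall i (Finset.mem_sdiff.mp hi).1
          linarith
        have h2 : ∑ i ∈ Iτ, (d i - p k)
            = ∑ i ∈ Iτ, (d i - τ) + (Iτ.card : ℝ) * (τ - p k) := by
          rw [Finset.sum_sub_distrib, Finset.sum_sub_distrib, Finset.sum_const,
            Finset.sum_const, nsmul_eq_mul]
          ring
        have hcτ : (0:ℝ) < (Iτ.card : ℝ) := by exact_mod_cast hIτne.card_pos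
        nlinarith [hIτsum, hs, hsplit, h1, h2, mul_pos hcτ (sub_pos.mpr hlt)]
      · exact heq
    refine ⟨hpk, Finset.Subset.antisymm (fun i hi => ?_) (inv k).1⟩
    exact (hmemIτ i).mpr (hpk ▸ hall i hi)
  -- termination
  have term : ∃ k ≤ n, I (k + 1) = I k := by
    by_contra h
    push_neg at h
    have hdec : ∀ k ≤ n, (I (k + 1)).card < (I k).card := by
      intro k hk
      refine Finset.card_lt_card (Finset.ssubset_iff_subset_ne.mpr ⟨?_, h k hk⟩)
      rw [hIsucc k]; exact Finset.filter_subset _ _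
    have hbound : ∀ k, k ≤ n + 1 → (I k).card + k ≤ n := by
      intro k
      induction k with
      | zero => intro _; simpa [hI0] using le_rfl
      | succ k ih =>
        intro hk
        have hk' : k ≤ n := Nat.lt_succ_iff.mp hk
        have := hdec k hk'
        have := ih (le_trans hk' (Nat.le_succ n))
        omega
    have := hbound n (Nat.le_succ n)
    have := (hne n).card_pos
    omega
  refine ⟨fun k => ?_, term⟩
  exact ⟨⟨(inv (k+1)).1, by rw [hIsucc k]; exact Finset.filter_subset _ _⟩,
    hne k, ⟨mono k, (inv (k+1)).2⟩, fix k⟩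
end

section
/- Let 1 ≤ m ≤ n, d ∈ ℝ^n, b > 0, and let d̂ = (d_1,…,d_m) ∈ ℝ^m be the subvector of the first m entries of d. Let v* be the projection of d onto the simplex Δ_b ⊆ ℝ^n with pivot τ, and let v̂* be the projection of d̂ onto the simplex Δ̂_b = {v ∈ ℝ^m : Σ_{i=1}^m v_i = b, v ≥ 0} with pivot τ̂. Then τ ≥ τ̂; consequently, for every 1 ≤ i ≤ m, if v̂*_i = 0 then v*_i = 0. -/
/-- Let `1 ≤ m ≤ n`, let `d̂ ∈ ℝ^m` be the subvector of the first `m` entries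
of `d ∈ ℝ^n`, let `v` be the projection of `d` onto `Δ_b ⊆ ℝ^n` with pivot `τ`, and `v̂` the
projection of `d̂` onto `Δ̂_b ⊆ ℝ^m` with pivot `τ̂`. Then `τ ≥ τ̂`; consequently, for every
`i ≤ m`, `v̂ i = 0` implies `v i = 0`. -/
theorem subvector_projection_pivot_le
    (n m : ℕ) (hm : 1 ≤ m) (hmn : m ≤ n) (b : ℝ) (hb : 0 < b)
    (d v : EuclideanSpace ℝ (Fin n))
    (dhat vhat : EuclideanSpace ℝ (Fin m))
    (hdhat : ∀ i : Fin m, dhat i = d (Fin.castLE hmn i))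
    (hmem : (∑ i, v i) = b ∧ ∀ i, 0 ≤ v i)
    (hmin : ∀ w : EuclideanSpace ℝ (Fin n),
      ((∑ i, w i) = b ∧ ∀ i, 0 ≤ w i) → ‖v - d‖ ≤ ‖w - d‖)
    (τ : ℝ) (hτ : ∀ i, v i = max (d i - τ) 0)
    (hmemhat : (∑ i, vhat i) = b ∧ ∀ i, 0 ≤ vhat i)
    (hminhat : ∀ w : EuclideanSpace ℝ (Fin m),
      ((∑ i, w i) = b ∧ ∀ i, 0 ≤ w i) → ‖vhat - dhat‖ ≤ ‖w - dhat‖)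
    (τhat : ℝ) (hτhat : ∀ i, vhat i = max (dhat i - τhat) 0) :
    τhat ≤ τ ∧ ∀ i : Fin m, vhat i = 0 → v (Fin.castLE hmn i) = 0 := by
  obtain ⟨hvsum, hvpos⟩ := hmem
  obtain ⟨hvhsum, hvhpos⟩ := hmemhat
  -- sum of v over the first m coordinates is at most b
  have hsub : ∑ i : Fin m, v (Fin.castLE hmn i) ≤ b := by
    have hmap : ∑ i : Fin m, v (Fin.castLE hmn i)
        = ∑ j ∈ Finset.univ.map (Fin.castLEEmb hmn), v j := by
      rw [Finset.sum_map]; rfl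
    rw [hmap, ← hvsum]
    exact Finset.sum_le_sum_of_subset_of_nonneg (Finset.subset_univ _)
      (fun j _ _ => hvpos j)
  have hle : τhat ≤ τ := by
    by_contra h
    push_neg at h
    obtain ⟨i0, hi0⟩ : ∃ i : Fin m, 0 < vhat i := by
      by_contra hc
      push_neg at hc
      have : (∑ i, vhat i) ≤ 0 := Finset.sum_nonpos (fun i _ => hc i)
      linarith [hvhsum ▸ this]
    have hlt : ∑ i : Fin m, vhat i < ∑ i : Fin m, v (Fin.castLE hmn i) := by
      apply Finset.sum_lt_sum
      · intro i _
        rw [hτhat i, hτ, ← hdhat i]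
        exact max_le_max (by linarith) le_rfl
      · refine ⟨i0, Finset.mem_univ _, ?_⟩
        rw [hτhat i0] at hi0 ⊢
        rw [hτ, ← hdhat i0]
        have hd0 : 0 < dhat i0 - τhat := by
          by_contra hc
          push_neg at hc
          rw [max_eq_right hc] at hi0
          exact lt_irrefl _ hi0
        calc max (dhat i0 - τhat) 0 = dhat i0 - τhat := max_eq_left (le_of_lt hd0)
          _ < dhat i0 - τ := by linarith
          _ ≤ max (dhat i0 - τ) 0 := le_max_left _ _
    rw [hvhsum] at hlt
    linarith
  refine ⟨hle, fun i hi => ?_⟩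
  have : max (dhat i - τhat) 0 = 0 := (hτhat i).symm.trans hi
  have hdle : dhat i - τhat ≤ 0 := by
    by_contra hc
    push_neg at hc
    rw [max_eq_left (le_of_lt hc)] at this
    linarith
  rw [hτ, ← hdhat i, max_eq_right (by linarith)]
end

section
/- Fix b > 0 and let X be a real random variable whose law is absolutely continuous (has a probability density function) and satisfies E[X²] < ∞. For each n, let d^{(n)} = (d_1,…,d_n) where (d_i)_{i≥1} are i.i.d. copies of X, let τ_n be the pivot of the projection of d^{(n)} onto the simplex Δ_b ⊆ ℝ^n, and let |I_{τ_n}| = #{i ∈ {1,…,n} : d_i > τ_n}. Then for every ε > 0, lim_{n→∞} P(|I_{τ_n}|/n ≤ ε) = 1. -/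
open MeasureTheory ProbabilityTheory Filter Finset Topology
open scoped ENNReal NNReal

lemma aux_quantile (μ : Measure ℝ) [IsProbabilityMeasure μ]
    (hatom : ∀ x : ℝ, μ {x} = 0) {ε : ℝ} (hε0 : 0 < ε) (hε1 : ε < 1) :
    ∃ q2 q1 : ℝ, q2 < q1 ∧ (μ (Set.Ioi q2)).toReal < ε ∧ 0 < (μ (Set.Ioi q1)).toReal := by
  set G : ℝ → ℝ := fun x => (μ (Set.Ioi x)).toReal with hG
  have hGanti : Antitone G := fun x y hxy =>
    ENNReal.toReal_mono (measure_ne_top _ _) (measure_mono (Set.Ioi_subset_Ioi hxy))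
  have hle : ∀ x : ℝ, G x < ε → μ (Set.Ioi x) ≤ ENNReal.ofReal ε := by
    intro x hx
    rw [← ENNReal.ofReal_toReal (measure_ne_top μ (Set.Ioi x))]
    exact ENNReal.ofReal_le_ofReal hx.le
  set S : Set ℝ := {x | G x < ε} with hS
  -- S is nonempty
  have hSne : S.Nonempty := by
    have h1 : Tendsto (fun n : ℕ => μ (Set.Ioi (n : ℝ))) atTop (𝓝 (μ (⋂ n : ℕ, Set.Ioi (n : ℝ)))) :=
      tendsto_measure_iInter_atTop
        (fun n => (measurableSet_Ioi).nullMeasurableSet)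
        (fun n m hnm => Set.Ioi_subset_Ioi (by exact_mod_cast hnm))
        ⟨0, measure_ne_top _ _⟩
    have h2 : (⋂ n : ℕ, Set.Ioi (n : ℝ)) = ∅ := by
      ext x
      simp only [Set.mem_iInter, Set.mem_Ioi, Set.mem_empty_iff_false, iff_false, not_forall,
        not_lt]
      obtain ⟨n, hn⟩ := exists_nat_ge x
      exact ⟨n, hn⟩
    rw [h2, measure_empty] at h1
    have h3 : ∀ᶠ n : ℕ in atTop, μ (Set.Ioi (n : ℝ)) < ENNReal.ofReal ε :=
      h1.eventually_lt_const (by simpa using hε0)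
    obtain ⟨n, hn⟩ := h3.exists
    exact ⟨n, by
      simp only [hS, Set.mem_setOf_eq, hG]
      exact ENNReal.toReal_lt_of_lt_ofReal hn⟩
  -- S is bounded below
  have hSbdd : BddBelow S := by
    by_contra hbdd
    have hall : ∀ y : ℝ, ∃ x ∈ S, x < y := by
      intro y
      rw [not_bddBelow_iff] at hbdd
      exact hbdd y
    have h1 : Tendsto (fun n : ℕ => μ (Set.Ioi (-(n : ℝ)))) atTop
        (𝓝 (μ (⋃ n : ℕ, Set.Ioi (-(n : ℝ))))) := by
      have := tendsto_measure_iUnion_atTop (μ := μ)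
        (s := fun n : ℕ => Set.Ioi (-(n : ℝ)))
        (fun n m hnm => Set.Ioi_subset_Ioi (by exact_mod_cast neg_le_neg (by exact_mod_cast hnm)))
      exact this
    have h2 : (⋃ n : ℕ, Set.Ioi (-(n : ℝ))) = Set.univ := by
      ext x
      simp only [Set.mem_iUnion, Set.mem_Ioi, Set.mem_univ, iff_true]
      obtain ⟨n, hn⟩ := exists_nat_gt (-x)
      exact ⟨n, by linarith⟩
    rw [h2, measure_univ] at h1
    have hub : ∀ n : ℕ, μ (Set.Ioi (-(n : ℝ))) ≤ ENNReal.ofReal ε := by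
      intro n
      obtain ⟨x, hxS, hxlt⟩ := hall (-(n : ℝ))
      exact le_trans (measure_mono (Set.Ioi_subset_Ioi hxlt.le)) (hle x hxS)
    have : (1 : ℝ≥0∞) ≤ ENNReal.ofReal ε :=
      le_of_tendsto h1 (Eventually.of_forall hub)
    have : ENNReal.ofReal ε < 1 := by
      rw [ENNReal.ofReal_lt_one]
      exact hε1
    exact absurd ‹(1 : ℝ≥0∞) ≤ ENNReal.ofReal ε› (not_le.mpr this)
  set t := sInf S with ht
  have ht_lt : ∀ x, t < x → G x < ε := by
    intro x hx
    obtain ⟨z, hzS, hzx⟩ := exists_lt_of_csInf_lt hSne hx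
    exact lt_of_le_of_lt (hGanti hzx.le) hzS
  have ht_ge : ∀ x, x < t → ε ≤ G x := by
    intro x hx
    by_contra h
    exact absurd (csInf_le hSbdd (show x ∈ S from not_le.mp h)) (not_le.mpr hx)
  by_cases hcase : ∃ x, t < x ∧ 0 < G x
  · obtain ⟨x, htx, hx⟩ := hcase
    refine ⟨(t + x) / 2, x, by linarith, ht_lt _ (by linarith), hx⟩
  · exfalso
    push_neg at hcase
    have hzero : ∀ x, t < x → μ (Set.Ioi x) = 0 := by
      intro x hx
      have h0 : G x = 0 := le_antisymm (hcase x hx) ENNReal.toReal_nonneg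
      rwa [hG, ENNReal.toReal_eq_zero_iff, or_iff_left (measure_ne_top μ _)] at h0
    have hIoit : μ (Set.Ioi t) = 0 := by
      have hsub : Set.Ioi t ⊆ ⋃ n : ℕ, Set.Ioi (t + 1 / (n + 1)) := by
        intro x hx
        obtain ⟨n, hn⟩ := exists_nat_one_div_lt (show (0:ℝ) < x - t from sub_pos.mpr hx)
        exact Set.mem_iUnion.mpr ⟨n, by simp only [Set.mem_Ioi]; push_cast; linarith⟩
      refine measure_mono_null hsub (measure_iUnion_null fun n => hzero _ ?_)
      have : (0:ℝ) < 1 / ((n:ℝ) + 1) := by positivity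
      linarith
    have hmem : ∀ n : ℕ, ENNReal.ofReal ε ≤ μ (Set.Ioc (t - 1 / (n + 1)) t) := by
      intro n
      have hpos : (0:ℝ) < 1 / ((n:ℝ) + 1) := by positivity
      have h1 : ε ≤ G (t - 1 / (n + 1)) := ht_ge _ (by linarith)
      have h2 : ENNReal.ofReal ε ≤ μ (Set.Ioi (t - 1 / (n + 1))) := by
        rw [← ENNReal.ofReal_toReal (measure_ne_top μ (Set.Ioi (t - 1 / (n + 1))))]
        exact ENNReal.ofReal_le_ofReal h1
      refine h2.trans ?_
      have hunion : Set.Ioi (t - 1 / ((n:ℝ) + 1)) ⊆ Set.Ioc (t - 1 / (n + 1)) t ∪ Set.Ioi t := by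
        intro x hx
        rcases le_or_gt x t with h | h
        · exact Or.inl ⟨hx, h⟩
        · exact Or.inr h
      calc μ (Set.Ioi (t - 1 / ((n:ℝ) + 1))) ≤ μ (Set.Ioc (t - 1 / (n + 1)) t ∪ Set.Ioi t) :=
            measure_mono hunion
        _ ≤ μ (Set.Ioc (t - 1 / (n + 1)) t) + μ (Set.Ioi t) := measure_union_le _ _
        _ = μ (Set.Ioc (t - 1 / (n + 1)) t) := by rw [hIoit, add_zero]
    have htend : Tendsto (fun n : ℕ => μ (Set.Ioc (t - 1 / (n + 1)) t)) atTop
        (𝓝 (μ (⋂ n : ℕ, Set.Ioc (t - 1 / (n + 1)) t))) := by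
      refine tendsto_measure_iInter_atTop (fun n => measurableSet_Ioc.nullMeasurableSet)
        (fun n m hnm => ?_) ⟨0, measure_ne_top _ _⟩
      apply Set.Ioc_subset_Ioc_left
      have hnm' : (n:ℝ) ≤ (m:ℝ) := Nat.cast_le.mpr hnm
      have : (1:ℝ) / ((m:ℝ) + 1) ≤ 1 / ((n:ℝ) + 1) := by
        apply one_div_le_one_div_of_le (by positivity)
        linarith
      linarith
    have hInter : (⋂ n : ℕ, Set.Ioc (t - 1 / ((n:ℝ) + 1)) t) = {t} := by
      ext x
      simp only [Set.mem_iInter, Set.mem_Ioc, Set.mem_singleton_iff]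
      constructor
      · intro h
        have hxle : x ≤ t := (h 0).2
        rcases eq_or_lt_of_le hxle with h' | h'
        · exact h'
        · obtain ⟨n, hn⟩ := exists_nat_one_div_lt (show (0:ℝ) < t - x from sub_pos.mpr h')
          exact absurd (h n).1 (by push_cast; linarith)
      · rintro rfl
        exact fun n => ⟨sub_lt_self t (by positivity), le_refl t⟩
    rw [hInter, hatom t] at htend
    have : ENNReal.ofReal ε ≤ 0 := ge_of_tendsto htend (Eventually.of_forall hmem)
    rw [le_zero_iff, ENNReal.ofReal_eq_zero] at this
    linarith

lemma aux_det {n : ℕ} (hn : 1 ≤ n) (dd : ℕ → ℝ) (t b ε q1 q2 : ℝ) (hq : q2 < q1)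
    (hsum : ∑ i ∈ range n, max (dd i - t) 0 = b)
    (h2 : ((((range n).filter (fun i => q2 < dd i)).card : ℝ)) ≤ ε * n)
    (h1 : b < (q1 - q2) * ((((range n).filter (fun i => q1 < dd i)).card : ℝ))) :
    ((((range n).filter (fun i => t < dd i)).card : ℝ)) / n ≤ ε := by
  have hnpos : (0:ℝ) < n := by exact_mod_cast hn
  by_contra hcon
  push_neg at hcon
  have hk : ε * n < (((range n).filter (fun i => t < dd i)).card : ℝ) :=
    (lt_div_iff₀ hnpos).mp hcon
  -- t < q2
  have htq2 : t < q2 := by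
    by_contra h
    push_neg at h
    have hsub : (range n).filter (fun i => t < dd i) ⊆ (range n).filter (fun i => q2 < dd i) :=
      filter_subset_filter _ (by intro i hi; exact hi) |>.trans (by
        intro i hi
        simp only [mem_filter] at hi ⊢
        exact ⟨hi.1, lt_of_le_of_lt h hi.2⟩)
    have := Finset.card_le_card hsub
    have : (((range n).filter (fun i => t < dd i)).card : ℝ)
        ≤ (((range n).filter (fun i => q2 < dd i)).card : ℝ) := by exact_mod_cast this
    linarith
  -- lower bound on the sum
  have hbound : (q1 - q2) * ((((range n).filter (fun i => q1 < dd i)).card : ℝ)) ≤ b := by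
    have hstep : ∀ i ∈ (range n).filter (fun i => q1 < dd i), q1 - q2 ≤ max (dd i - t) 0 := by
      intro i hi
      simp only [mem_filter] at hi
      have : q1 - q2 ≤ dd i - t := by linarith [hi.2]
      exact this.trans (le_max_left _ _)
    calc (q1 - q2) * ((((range n).filter (fun i => q1 < dd i)).card : ℝ))
        = ∑ _i ∈ (range n).filter (fun i => q1 < dd i), (q1 - q2) := by
          rw [Finset.sum_const, nsmul_eq_mul, mul_comm]
      _ ≤ ∑ i ∈ (range n).filter (fun i => q1 < dd i), max (dd i - t) 0 :=
          Finset.sum_le_sum hstep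
      _ ≤ ∑ i ∈ range n, max (dd i - t) 0 :=
          Finset.sum_le_sum_of_subset_of_nonneg (filter_subset _ _)
            (fun i _ _ => le_max_right _ _)
      _ = b := hsum
  linarith

lemma aux_lln {Ω : Type*} [MeasureSpace Ω] [IsProbabilityMeasure (ℙ : Measure Ω)]
    (d : ℕ → Ω → ℝ) (hmeas : ∀ i, Measurable (d i))
    (hindep : iIndepFun d ℙ)
    (hlaw : ∀ i, Measure.map (d i) ℙ = Measure.map (d 0) ℙ) (q : ℝ) :
    ∀ᵐ ω, Tendsto (fun n : ℕ => ((((range n).filter (fun i => q < d i ω)).card : ℝ)) / n)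
      atTop (𝓝 ((Measure.map (d 0) ℙ (Set.Ioi q)).toReal)) := by
  set f : ℝ → ℝ := (Set.Ioi q).indicator 1 with hf
  have hfm : Measurable f := measurable_one.indicator measurableSet_Ioi
  set Y : ℕ → Ω → ℝ := fun i ω => f (d i ω) with hY
  have hYm : ∀ i, Measurable (Y i) := fun i => hfm.comp (hmeas i)
  have hint : Integrable (Y 0) ℙ := by
    refine Integrable.mono' (integrable_const 1) (hYm 0).aestronglyMeasurable ?_
    refine Eventually.of_forall fun ω => ?_
    simp only [hY, hf, Set.indicator_apply, Pi.one_apply]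
    split <;> simp
  have hident : ∀ i, IdentDistrib (Y i) (Y 0) ℙ ℙ := by
    intro i
    have hdid : IdentDistrib (d i) (d 0) ℙ ℙ :=
      ⟨(hmeas i).aemeasurable, (hmeas 0).aemeasurable, hlaw i⟩
    exact hdid.comp hfm
  have hpair : Pairwise (Function.onFun (IndepFun · · ℙ) Y) := by
    intro i j hij
    exact (hindep.indepFun hij).comp hfm hfm
  have hsl := strong_law_ae_real Y hint hpair hident
  have hmean : 𝔼[Y 0] = (Measure.map (d 0) ℙ (Set.Ioi q)).toReal := by
    have h1 : ∫ ω, Y 0 ω ∂ℙ = ∫ x, f x ∂(Measure.map (d 0) ℙ) :=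
      (integral_map (hmeas 0).aemeasurable hfm.aestronglyMeasurable).symm
    rw [show 𝔼[Y 0] = ∫ ω, Y 0 ω ∂ℙ from rfl, h1, hf,
      integral_indicator_one measurableSet_Ioi, measureReal_def]
  rw [hmean] at hsl
  filter_upwards [hsl] with ω hω
  convert hω using 2 with n
  rw [Finset.card_filter]
  push_cast
  refine congrArg (· / (n:ℝ)) ?_
  refine Finset.sum_congr rfl fun i _ => ?_
  simp only [hY, hf, Set.indicator_apply, Set.mem_Ioi, Pi.one_apply]


/-- Fix `b > 0` and let `X` be a real random variable with an absolutely
continuous law and `E[X²] < ∞`. Let `(d i)` be i.i.d. copies of `X`, and for each `n ≥ 1` let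
`τ n` be the (random) pivot of the projection of `(d 0, …, d (n−1))` onto `Δ_b ⊆ ℝ^n`, and
`|I_{τ n}| = #{i < n : d i > τ n}`. Then for every `ε > 0`,
`P(|I_{τ n}|/n ≤ ε) → 1` as `n → ∞`. -/
theorem active_fraction_tendsto_zero
    {Ω : Type*} [MeasureSpace Ω] [IsProbabilityMeasure (ℙ : Measure Ω)]
    (b : ℝ) (hb : 0 < b)
    (X : Ω → ℝ) (hX : Measurable X)
    (hac : Measure.map X ℙ ≪ volume)
    (hmoment : Integrable (fun ω => X ω ^ 2) ℙ)
    (d : ℕ → Ω → ℝ) (hmeas : ∀ i, Measurable (d i))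
    (hindep : iIndepFun d ℙ)
    (hlaw : ∀ i, Measure.map (d i) ℙ = Measure.map X ℙ)
    (D : ∀ n : ℕ, Ω → EuclideanSpace ℝ (Fin n))
    (hD : ∀ n ω (i : Fin n), D n ω i = d i ω)
    (v : ∀ n : ℕ, Ω → EuclideanSpace ℝ (Fin n)) (τ : ℕ → Ω → ℝ)
    (hmem : ∀ n, 1 ≤ n → ∀ ω, (∑ i, v n ω i) = b ∧ ∀ i, 0 ≤ v n ω i)
    (hmin : ∀ n, 1 ≤ n → ∀ ω, ∀ w : EuclideanSpace ℝ (Fin n),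
      ((∑ i, w i) = b ∧ ∀ i, 0 ≤ w i) → ‖v n ω - D n ω‖ ≤ ‖w - D n ω‖)
    (hτ : ∀ n, 1 ≤ n → ∀ ω, ∀ i : Fin n, v n ω i = max (d i ω - τ n ω) 0) :
    ∀ ε : ℝ, 0 < ε →
      Tendsto (fun n : ℕ =>
        (ℙ {ω | (((range n).filter (fun i => τ n ω < d i ω)).card : ℝ) / (n : ℝ) ≤ ε}).toReal)
        atTop (nhds 1) := by
  intro ε hε
  classical
  set μ := Measure.map X ℙ with hμ
  haveI : IsProbabilityMeasure μ := Measure.isProbabilityMeasure_map hX.aemeasurable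
  have hatom : ∀ x : ℝ, μ {x} = 0 := fun x => hac Real.volume_singleton
  have hε'0 : 0 < min ε (1/2) := lt_min hε (by norm_num)
  have hε'1 : min ε (1/2) < 1 := lt_of_le_of_lt (min_le_right _ _) (by norm_num)
  obtain ⟨q2, q1, hq, hq2, hq1⟩ := aux_quantile μ hatom hε'0 hε'1
  have hq2ε : (μ (Set.Ioi q2)).toReal < ε := lt_of_lt_of_le hq2 (min_le_left _ _)
  have hlaw0 : ∀ i, Measure.map (d i) ℙ = Measure.map (d 0) ℙ :=
    fun i => (hlaw i).trans (hlaw 0).symm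
  have hmap0 : Measure.map (d 0) ℙ = μ := hlaw 0
  set N : ℝ → ℕ → Ω → ℕ := fun q n ω => ((range n).filter (fun i => q < d i ω)).card with hN
  have hNmeas : ∀ q n, Measurable (fun ω => (N q n ω : ℝ)) := by
    intro q n
    have hrw : (fun ω => (N q n ω : ℝ))
        = fun ω => ∑ i ∈ range n, if q < d i ω then (1:ℝ) else 0 := by
      funext ω
      rw [hN]
      simp only
      rw [Finset.card_filter]
      push_cast
      rfl
    rw [hrw]
    exact Finset.measurable_sum _ fun i _ =>
      Measurable.ite (measurableSet_lt measurable_const (hmeas i))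
        measurable_const measurable_const
  set A : ℕ → Set Ω := fun n =>
    {ω | ((N q2 n ω : ℝ)) ≤ ε * n ∧ b < (q1 - q2) * (N q1 n ω : ℝ)} with hA
  have hAmeas : ∀ n, MeasurableSet (A n) := by
    intro n
    exact (measurableSet_le (hNmeas q2 n) measurable_const).inter
      (measurableSet_lt measurable_const ((hNmeas q1 n).const_mul _))
  have hae2 := aux_lln d hmeas hindep hlaw0 q2
  have hae1 := aux_lln d hmeas hindep hlaw0 q1
  rw [hmap0] at hae2 hae1
  have hAE : ∀ᵐ ω ∂(ℙ : Measure Ω), ∀ᶠ n : ℕ in atTop, ω ∈ A n := by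
    filter_upwards [hae2, hae1] with ω h2 h1
    have e2 : ∀ᶠ n : ℕ in atTop, ((N q2 n ω : ℝ)) ≤ ε * n := by
      have he := h2.eventually_lt_const hq2ε
      filter_upwards [he, eventually_ge_atTop 1] with n hn hn1
      have hnpos : (0:ℝ) < n := by exact_mod_cast hn1
      have := (div_lt_iff₀ hnpos).mp hn
      exact this.le.trans (by ring_nf; exact le_refl _)
    have e1 : ∀ᶠ n : ℕ in atTop, b < (q1 - q2) * (N q1 n ω : ℝ) := by
      have hpos : 0 < (q1 - q2) * (μ (Set.Ioi q1)).toReal := mul_pos (sub_pos.mpr hq) hq1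
      have htendprod : Tendsto (fun n : ℕ => ((q1 - q2) * ((N q1 n ω : ℝ) / n)) * n)
          atTop atTop :=
        Tendsto.pos_mul_atTop hpos (h1.const_mul _) tendsto_natCast_atTop_atTop
      have hcongr : ∀ᶠ n : ℕ in atTop,
          ((q1 - q2) * ((N q1 n ω : ℝ) / n)) * n = (q1 - q2) * (N q1 n ω : ℝ) := by
        filter_upwards [eventually_ge_atTop 1] with n hn
        have hnpos : (0:ℝ) < n := by exact_mod_cast hn
        field_simp
      exact (htendprod.congr' hcongr).eventually_gt_atTop b
    filter_upwards [e2, e1] with n hn2 hn1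
    exact ⟨hn2, hn1⟩
  have hkey : Tendsto (fun n => (ℙ (A n)).toReal) atTop (𝓝 1) := by
    have hdc : Tendsto (fun n => ∫ ω, (A n).indicator (1 : Ω → ℝ) ω ∂ℙ) atTop
        (𝓝 (∫ _ω, (1:ℝ) ∂(ℙ : Measure Ω))) := by
      refine tendsto_integral_of_dominated_convergence (fun _ => (1:ℝ))
        (fun n => (measurable_one.indicator (hAmeas n)).aestronglyMeasurable)
        (integrable_const 1) (fun n => ?_) ?_
      · refine Eventually.of_forall fun ω => ?_
        by_cases h : ω ∈ A n <;> simp [Set.indicator_apply, h]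
      · filter_upwards [hAE] with ω hω
        refine Tendsto.congr' ?_ (tendsto_const_nhds (x := (1:ℝ)))
        filter_upwards [hω] with n hn
        simp [Set.indicator_of_mem hn]
    have h1' : (∫ _ω, (1:ℝ) ∂(ℙ : Measure Ω)) = 1 := by simp
    rw [h1'] at hdc
    exact Tendsto.congr (fun n => integral_indicator_one (hAmeas n)) hdc
  refine tendsto_of_tendsto_of_tendsto_of_le_of_le' hkey tendsto_const_nhds ?_ ?_
  · filter_upwards [eventually_ge_atTop 1] with n hn
    refine ENNReal.toReal_mono (measure_ne_top _ _) (measure_mono ?_)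
    intro ω hω
    obtain ⟨hω2, hω1⟩ := hω
    show (((range n).filter (fun i => τ n ω < d i ω)).card : ℝ) / n ≤ ε
    have hsum : ∑ i ∈ range n, max (d i ω - τ n ω) 0 = b := by
      rw [← (hmem n hn ω).1,
        ← Fin.sum_univ_eq_sum_range (fun i => max (d i ω - τ n ω) 0) n]
      exact Finset.sum_congr rfl fun i _ => (hτ n hn ω i).symm
    exact aux_det hn (fun i => d i ω) (τ n ω) b ε q1 q2 hq hsum hω2 hω1
  · refine Eventually.of_forall fun n => ?_
    have := ENNReal.toReal_mono ENNReal.one_ne_top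
      (prob_le_one (μ := (ℙ : Measure Ω))
        (s := {ω | (((range n).filter (fun i => τ n ω < d i ω)).card : ℝ) / (n : ℝ) ≤ ε}))
    simpa using this
end

section
/- Let X be a real random variable whose law is absolutely continuous (has a probability density function) and satisfies E[X²] < ∞, and let (b_n)_{n≥1} be positive reals with b_n/n → 0 as n → ∞. For each n, let d^{(n)} = (d_1,…,d_n) where (d_i)_{i≥1} are i.i.d. copies of X, let τ_n be the pivot of the projection of d^{(n)} onto the simplex Δ_{b_n} ⊆ ℝ^n, and let |I_{τ_n}| = #{i ∈ {1,…,n} : d_i > τ_n}. Then for every ε > 0, lim_{n→∞} P(|I_{τ_n}|/n ≤ ε) = 1. -/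
open MeasureTheory ProbabilityTheory Filter Finset


lemma exists_threshold (μ : Measure ℝ) [IsProbabilityMeasure μ]
    (hatom : ∀ x : ℝ, μ {x} = 0) {ε : ℝ} (hε : 0 < ε) :
    ∃ t : ℝ, 0 < μ (Set.Ioi t) ∧ (μ (Set.Ioi t)).toReal < ε := by
  by_cases hA : BddAbove {t : ℝ | 0 < μ (Set.Ioi t)}
  · -- bounded case
    have hne : {t : ℝ | 0 < μ (Set.Ioi t)}.Nonempty := by
      have hU : Tendsto (μ ∘ fun n : ℕ => Set.Ioi (-(n : ℝ))) atTop
          (nhds (μ (⋃ n : ℕ, Set.Ioi (-(n : ℝ))))) :=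
        tendsto_measure_iUnion_atTop (fun i j hij => Set.Ioi_subset_Ioi (by
          simp only [neg_le_neg_iff, Nat.cast_le]; exact hij))
      have hunion : (⋃ n : ℕ, Set.Ioi (-(n : ℝ))) = Set.univ := by
        ext x; simp only [Set.mem_iUnion, Set.mem_Ioi, Set.mem_univ, iff_true]
        obtain ⟨n, hn⟩ := exists_nat_gt (-x)
        exact ⟨n, by linarith⟩
      rw [hunion, measure_univ] at hU
      obtain ⟨n, hn⟩ := (hU.eventually (eventually_gt_nhds zero_lt_one)).exists
      exact ⟨-(n : ℝ), hn⟩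
    set T := sSup {t : ℝ | 0 < μ (Set.Ioi t)} with hT
    have hpos : ∀ k : ℕ, 0 < μ (Set.Ioi (T - 1 / (k + 1))) := by
      intro k
      have hlt : T - 1 / (k + 1) < T := by
        have : (0:ℝ) < 1 / (k + 1) := by positivity
        linarith
      obtain ⟨a, ha, hlta⟩ := exists_lt_of_lt_csSup hne hlt
      exact lt_of_lt_of_le ha (measure_mono (Set.Ioi_subset_Ioi hlta.le))
    have hIoiT : μ (Set.Ioi T) = 0 := by
      have : Set.Ioi T = ⋃ k : ℕ, Set.Ioi (T + 1 / (k + 1)) := by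
        ext x; simp only [Set.mem_iUnion, Set.mem_Ioi]
        constructor
        · intro hx
          obtain ⟨k, hk⟩ := exists_nat_one_div_lt (show (0:ℝ) < x - T by linarith)
          exact ⟨k, by linarith⟩
        · rintro ⟨k, hk⟩
          have : (0:ℝ) < 1 / (k + 1) := by positivity
          linarith
      rw [this]
      refine measure_iUnion_null fun k => ?_
      by_contra h
      have hmem : T + 1 / (k + 1) ∈ {t : ℝ | 0 < μ (Set.Ioi t)} :=
        pos_iff_ne_zero.2 h
      have := le_csSup hA hmem
      have hk : (0:ℝ) < 1 / (k + 1) := by positivity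
      linarith
    have hIciT : μ (Set.Ici T) = 0 := by
      have : Set.Ici T = {T} ∪ Set.Ioi T := by
        ext x; simp only [Set.mem_Ici, Set.mem_union, Set.mem_singleton_iff, Set.mem_Ioi]
        constructor
        · intro h; rcases eq_or_lt_of_le h with h | h
          · exact Or.inl h.symm
          · exact Or.inr h
        · rintro (rfl | h); exacts [le_rfl, h.le]
      rw [this]
      exact le_antisymm ((measure_union_le _ _).trans (by rw [hatom, hIoiT]; simp))
        zero_le
    have hcap : (⋂ k : ℕ, Set.Ioi (T - 1 / (k + 1))) = Set.Ici T := by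
      ext x; simp only [Set.mem_iInter, Set.mem_Ioi, Set.mem_Ici]
      constructor
      · intro h
        by_contra hx
        push_neg at hx
        obtain ⟨k, hk⟩ := exists_nat_one_div_lt (show (0:ℝ) < T - x by linarith)
        have := h k
        linarith
      · intro h k
        have : (0:ℝ) < 1 / (k + 1) := by positivity
        linarith
    have hto : Tendsto (μ ∘ fun k : ℕ => Set.Ioi (T - 1 / (k + 1))) atTop (nhds 0) := by
      have := tendsto_measure_iInter_atTop (μ := μ)
        (s := fun k : ℕ => Set.Ioi (T - 1 / (k + 1)))
        (fun k => measurableSet_Ioi.nullMeasurableSet)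
        (fun i j hij => Set.Ioi_subset_Ioi (by
          have : 1 / ((j:ℝ) + 1) ≤ 1 / ((i:ℝ) + 1) := by
            apply one_div_le_one_div_of_le (by positivity) (by exact_mod_cast by linarith [hij])
          linarith))
        ⟨0, measure_ne_top μ _⟩
      rwa [hcap, hIciT] at this
    have : ∀ᶠ k : ℕ in atTop, (μ (Set.Ioi (T - 1 / (k + 1)))).toReal < ε := by
      have := (ENNReal.tendsto_toReal ENNReal.zero_ne_top).comp hto
      simp only [ENNReal.toReal_zero] at this
      exact this.eventually_lt_const hε
    obtain ⟨k, hk⟩ := this.exists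
    exact ⟨T - 1 / (k + 1), hpos k, hk⟩
  · -- unbounded case
    have hI : Tendsto (μ ∘ fun n : ℕ => Set.Ioi ((n : ℝ))) atTop
        (nhds (μ (⋂ n : ℕ, Set.Ioi ((n : ℝ))))) :=
      tendsto_measure_iInter_atTop (fun k => measurableSet_Ioi.nullMeasurableSet)
        (fun i j hij => Set.Ioi_subset_Ioi (by exact_mod_cast hij))
        ⟨0, measure_ne_top μ _⟩
    have hcap : (⋂ n : ℕ, Set.Ioi ((n : ℝ))) = ∅ := by
      ext x; simp only [Set.mem_iInter, Set.mem_Ioi, Set.mem_empty_iff_false, iff_false]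
      push_neg
      obtain ⟨n, hn⟩ := exists_nat_gt x
      exact ⟨n, hn.le⟩
    rw [hcap, measure_empty] at hI
    have : ∀ᶠ n : ℕ in atTop, (μ (Set.Ioi ((n:ℝ)))).toReal < ε := by
      have := (ENNReal.tendsto_toReal ENNReal.zero_ne_top).comp hI
      simp only [ENNReal.toReal_zero] at this
      exact this.eventually_lt_const hε
    obtain ⟨n, hn⟩ := this.exists
    rw [not_bddAbove_iff] at hA
    obtain ⟨a, ha, hna⟩ := hA (n : ℝ)
    refine ⟨a, ha, lt_of_le_of_lt ?_ hn⟩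
    exact ENNReal.toReal_mono (measure_ne_top μ _) (measure_mono (Set.Ioi_subset_Ioi hna.le))

/-- Let `X` be a real random variable with an absolutely continuous law and
`E[X²] < ∞`, and let `(b n)` be positive reals with `b n / n → 0`. Let `(d i)` be i.i.d.
copies of `X`, and for each `n ≥ 1` let `τ n` be the (random) pivot of the projection of
`(d 0, …, d (n−1))` onto `Δ_{b n} ⊆ ℝ^n`, and `|I_{τ n}| = #{i < n : d i > τ n}`. Then for
every `ε > 0`, `P(|I_{τ n}|/n ≤ ε) → 1` as `n → ∞`. -/
theorem active_fraction_tendsto_zero_of_sublinear_b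
    {Ω : Type*} [MeasureSpace Ω] [IsProbabilityMeasure (ℙ : Measure Ω)]
    (b : ℕ → ℝ) (hb : ∀ n, 1 ≤ n → 0 < b n)
    (hbn : Tendsto (fun n : ℕ => b n / (n : ℝ)) atTop (nhds 0))
    (X : Ω → ℝ) (hX : Measurable X)
    (hac : Measure.map X ℙ ≪ volume)
    (hmoment : Integrable (fun ω => X ω ^ 2) ℙ)
    (d : ℕ → Ω → ℝ) (hmeas : ∀ i, Measurable (d i))
    (hindep : iIndepFun d ℙ)
    (hlaw : ∀ i, Measure.map (d i) ℙ = Measure.map X ℙ)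
    (D : ∀ n : ℕ, Ω → EuclideanSpace ℝ (Fin n))
    (hD : ∀ n ω (i : Fin n), D n ω i = d i ω)
    (v : ∀ n : ℕ, Ω → EuclideanSpace ℝ (Fin n)) (τ : ℕ → Ω → ℝ)
    (hmem : ∀ n, 1 ≤ n → ∀ ω, (∑ i, v n ω i) = b n ∧ ∀ i, 0 ≤ v n ω i)
    (hmin : ∀ n, 1 ≤ n → ∀ ω, ∀ w : EuclideanSpace ℝ (Fin n),
      ((∑ i, w i) = b n ∧ ∀ i, 0 ≤ w i) → ‖v n ω - D n ω‖ ≤ ‖w - D n ω‖)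
    (hτ : ∀ n, 1 ≤ n → ∀ ω, ∀ i : Fin n, v n ω i = max (d i ω - τ n ω) 0) :
    ∀ ε : ℝ, 0 < ε →
      Tendsto (fun n : ℕ =>
        (ℙ {ω | (((range n).filter (fun i => τ n ω < d i ω)).card : ℝ) / (n : ℝ) ≤ ε}).toReal)
        atTop (nhds 1) := by
  intro ε hε
  set μ := Measure.map X ℙ with hμ
  have hμprob : IsProbabilityMeasure μ := Measure.isProbabilityMeasure_map hX.aemeasurable
  have hatom : ∀ x : ℝ, μ {x} = 0 := fun x => hac (Real.volume_singleton)
  obtain ⟨t, ht0, htε⟩ := exists_threshold μ hatom hε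
  -- the two test functions
  set f1 : ℝ → ℝ := fun x => if t < x then 1 else 0 with hf1def
  set f2 : ℝ → ℝ := fun x => max (x - t) 0 with hf2def
  have hf1 : Measurable f1 := measurable_const.ite measurableSet_Ioi measurable_const
  have hf2 : Measurable f2 := (measurable_id.sub measurable_const).max measurable_const
  -- integrability of X and d 0
  have hXint : Integrable X ℙ := by
    refine Integrable.mono' (hmoment.add (integrable_const 1)) hX.aestronglyMeasurable
      (Eventually.of_forall fun ω => ?_)
    have h1 : |X ω| ≤ X ω ^ 2 + 1 := by nlinarith [sq_nonneg (|X ω| - 1), sq_abs (X ω)]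
    simpa using h1
  have hident0X : IdentDistrib (d 0) X ℙ ℙ :=
    ⟨(hmeas 0).aemeasurable, hX.aemeasurable, hlaw 0⟩
  have hd0int : Integrable (d 0) ℙ := (hident0X.integrable_iff).2 hXint
  -- identically distributed copies
  have hident : ∀ i, IdentDistrib (d i) (d 0) ℙ ℙ := fun i =>
    ⟨(hmeas i).aemeasurable, (hmeas 0).aemeasurable, by rw [hlaw i, hlaw 0]⟩
  -- Y and Z
  set Y : ℕ → Ω → ℝ := fun i ω => f1 (d i ω) with hYdef
  set Z : ℕ → Ω → ℝ := fun i ω => f2 (d i ω) with hZdef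
  have hYint : Integrable (Y 0) ℙ := by
    refine Integrable.mono' (integrable_const 1) (hf1.comp (hmeas 0)).aestronglyMeasurable
      (Eventually.of_forall fun ω => ?_)
    simp only [hYdef, hf1def]
    split <;> simp
  have hZint : Integrable (Z 0) ℙ := by
    refine Integrable.mono' (hd0int.abs.add (integrable_const |t|))
      (hf2.comp (hmeas 0)).aestronglyMeasurable (Eventually.of_forall fun ω => ?_)
    simp only [hZdef, hf2def, Real.norm_eq_abs, Pi.add_apply]
    rw [abs_of_nonneg (le_max_right (d 0 ω - t) 0)]
    refine max_le ?_ (by positivity)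
    have := abs_nonneg (d 0 ω)
    have h1 : d 0 ω ≤ |d 0 ω| := le_abs_self _
    have h2 : -t ≤ |t| := neg_le_abs t
    linarith
  have hYindep : Pairwise (Function.onFun (IndepFun · · ℙ) Y) := fun i j hij =>
    (hindep.indepFun hij).comp hf1 hf1
  have hZindep : Pairwise (Function.onFun (IndepFun · · ℙ) Z) := fun i j hij =>
    (hindep.indepFun hij).comp hf2 hf2
  have hYident : ∀ i, IdentDistrib (Y i) (Y 0) ℙ ℙ := fun i => (hident i).comp hf1
  have hZident : ∀ i, IdentDistrib (Z i) (Z 0) ℙ ℙ := fun i => (hident i).comp hf2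
  -- expectations
  have hf1ind : f1 = (Set.Ioi t).indicator (fun _ => (1:ℝ)) := by
    funext x
    simp [hf1def, Set.indicator_apply, Set.mem_Ioi]
  have hEY : ∫ ω, Y 0 ω ∂ℙ = (μ (Set.Ioi t)).toReal := by
    have h1 : ∫ ω, Y 0 ω ∂ℙ = ∫ x, f1 x ∂(Measure.map (d 0) ℙ) :=
      (integral_map (hmeas 0).aemeasurable hf1.aestronglyMeasurable).symm
    rw [h1, hlaw 0, hf1ind, integral_indicator_const (1:ℝ) measurableSet_Ioi]
    simp [Measure.real]
  have hf2intμ : Integrable f2 μ := by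
    rw [(hlaw 0).symm]
    exact (integrable_map_measure hf2.aestronglyMeasurable
      (hmeas 0).aemeasurable).2 hZint
  have hEZ : ∫ ω, Z 0 ω ∂ℙ = ∫ x, f2 x ∂μ := by
    have h1 : ∫ ω, Z 0 ω ∂ℙ = ∫ x, f2 x ∂(Measure.map (d 0) ℙ) :=
      (integral_map (hmeas 0).aemeasurable hf2.aestronglyMeasurable).symm
    rw [h1, hlaw 0]
  have hsupp : Function.support (fun x : ℝ => max (x - t) 0) = Set.Ioi t := by
    ext x
    simp only [Function.mem_support, ne_eq, max_eq_right_iff, not_le, sub_pos, Set.mem_Ioi]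
  have hm : 0 < ∫ x, f2 x ∂μ := by
    refine (integral_pos_iff_support_of_nonneg (f := f2)
      (fun x => le_max_right _ _) hf2intμ).2 ?_
    rw [hf2def, hsupp]
    exact ht0
  -- strong law
  have hSLY := strong_law_ae_real Y hYint hYindep hYident
  have hSLZ := strong_law_ae_real Z hZint hZindep hZident
  rw [hEY] at hSLY
  rw [hEZ] at hSLZ
  -- good events
  set B : ℕ → Set Ω := fun n =>
    {ω | (∑ i ∈ range n, Y i ω) / n ≤ ε ∧ b n < ∑ i ∈ range n, Z i ω} with hBdef
  have hBmeas : ∀ n, MeasurableSet (B n) := by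
    intro n
    have h1 : Measurable fun ω => ∑ i ∈ range n, Y i ω :=
      Finset.measurable_sum _ (fun i _ => hf1.comp (hmeas i))
    have h2 : Measurable fun ω => ∑ i ∈ range n, Z i ω :=
      Finset.measurable_sum _ (fun i _ => hf2.comp (hmeas i))
    exact (measurableSet_le (h1.div_const _) measurable_const).inter
      (measurableSet_lt measurable_const h2)
  have hAE : ∀ᵐ ω ∂ℙ, ∀ᶠ n in atTop, ω ∈ B n := by
    filter_upwards [hSLY, hSLZ] with ω hY' hZ'
    have e1 : ∀ᶠ n : ℕ in atTop, (∑ i ∈ range n, Y i ω) / n ≤ ε := by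
      filter_upwards [hY'.eventually_lt_const htε] with n hn using hn.le
    have e2 : ∀ᶠ n : ℕ in atTop, b n < ∑ i ∈ range n, Z i ω := by
      have hdiff : Tendsto (fun n : ℕ => (∑ i ∈ range n, Z i ω) / n - b n / n) atTop
          (nhds (∫ x, f2 x ∂μ)) := by
        simpa using hZ'.sub hbn
      filter_upwards [hdiff.eventually_const_lt hm, eventually_ge_atTop 1] with n hn hn1
      have hn0 : (0:ℝ) < n := by exact_mod_cast hn1
      have := mul_lt_mul_of_pos_right (by linarith [hn] : b n / n < (∑ i ∈ range n, Z i ω) / n) hn0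
      rwa [div_mul_cancel₀ _ hn0.ne', div_mul_cancel₀ _ hn0.ne'] at this
    filter_upwards [e1, e2] with n h1 h2 using ⟨h1, h2⟩
  -- probability of B n tends to 1
  set C : ℕ → Set Ω := fun n => ⋂ m, ⋂ (_ : n ≤ m), B m with hCdef
  have hCmono : Monotone C := by
    intro a c hac' ω hω
    simp only [hCdef, Set.mem_iInter] at hω ⊢
    exact fun m hm => hω m (hac'.trans hm)
  have hCunion : ℙ (⋃ n, C n) = 1 := by
    have h0 : ℙ (⋃ n, C n)ᶜ = 0 := by
      have : ∀ᵐ ω ∂ℙ, ω ∈ ⋃ n, C n := by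
        filter_upwards [hAE] with ω hω
        obtain ⟨N, hN⟩ := eventually_atTop.1 hω
        exact Set.mem_iUnion.2 ⟨N, Set.mem_iInter.2 fun m => Set.mem_iInter.2 fun hm => hN m hm⟩
      exact ae_iff.1 this
    rw [← measure_univ (μ := (ℙ : Measure Ω)), measure_congr (ae_eq_univ.2 h0)]
  have hCto : Tendsto (fun n => ℙ (C n)) atTop (nhds 1) := by
    have := tendsto_measure_iUnion_atTop (μ := (ℙ : Measure Ω)) hCmono
    rwa [hCunion] at this
  have hBto : Tendsto (fun n => ℙ (B n)) atTop (nhds 1) := by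
    refine tendsto_of_tendsto_of_tendsto_of_le_of_le hCto tendsto_const_nhds
      (fun n => measure_mono ?_) (fun n => prob_le_one)
    intro ω hω
    simp only [hCdef, Set.mem_iInter] at hω
    exact hω n le_rfl
  have hBtoR : Tendsto (fun n => (ℙ (B n)).toReal) atTop (nhds 1) := by
    have := (ENNReal.tendsto_toReal ENNReal.one_ne_top).comp hBto
    exact this
  -- deterministic inclusion B n ⊆ A n for n ≥ 1
  have hincl : ∀ n : ℕ, 1 ≤ n → B n ⊆
      {ω | (((range n).filter (fun i => τ n ω < d i ω)).card : ℝ) / (n : ℝ) ≤ ε} := by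
    intro n hn ω hω
    obtain ⟨h1, h2⟩ := hω
    have hn0 : (0:ℝ) < n := by exact_mod_cast hn
    -- t < τ n ω
    have htτ : t < τ n ω := by
      by_contra hcon
      push_neg at hcon
      have hsum : (∑ i ∈ range n, Z i ω) ≤ b n := by
        have hv : (∑ i, v n ω i) = b n := (hmem n hn ω).1
        have : (∑ i, v n ω i) = ∑ i ∈ range n, max (d i ω - τ n ω) 0 := by
          rw [← Fin.sum_univ_eq_sum_range (fun j => max (d j ω - τ n ω) 0) n]
          exact Finset.sum_congr rfl fun i _ => hτ n hn ω i
        rw [this] at hv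
        rw [← hv]
        refine Finset.sum_le_sum fun i _ => ?_
        simp only [hZdef, hf2def]
        exact max_le_max (by linarith) le_rfl
      linarith
    -- cardinality comparison
    have hsub : (range n).filter (fun i => τ n ω < d i ω) ⊆
        (range n).filter (fun i => t < d i ω) := by
      intro i hi
      rw [Finset.mem_filter] at hi ⊢
      exact ⟨hi.1, lt_trans htτ hi.2⟩
    have hcard : (((range n).filter (fun i => τ n ω < d i ω)).card : ℝ) ≤
        (((range n).filter (fun i => t < d i ω)).card : ℝ) := by
      exact_mod_cast Finset.card_le_card hsub
    have hcardY : (((range n).filter (fun i => t < d i ω)).card : ℝ) = ∑ i ∈ range n, Y i ω := by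
      simp only [hYdef, hf1def]
      rw [Finset.card_filter]
      push_cast
      rfl
    calc (((range n).filter (fun i => τ n ω < d i ω)).card : ℝ) / n
        ≤ (((range n).filter (fun i => t < d i ω)).card : ℝ) / n := by
          gcongr
      _ = (∑ i ∈ range n, Y i ω) / n := by rw [hcardY]
      _ ≤ ε := h1
  -- final squeeze
  refine tendsto_of_tendsto_of_tendsto_of_le_of_le' hBtoR tendsto_const_nhds ?_ ?_
  · filter_upwards [eventually_ge_atTop 1] with n hn
    exact ENNReal.toReal_mono (measure_ne_top _ _) (measure_mono (hincl n hn))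
  · exact Eventually.of_forall fun n => ENNReal.toReal_mono ENNReal.one_ne_top prob_le_one
end

section
/- Fix b > 0 and let X be a real random variable whose law is absolutely continuous (has a probability density function) with E[X²] < ∞. Let t ∈ ℝ satisfy 0 < P(X > t) < 1, so that μ_t := E[X | X > t] > t. For each n, let d^{(n)} = (d_1,…,d_n) where (d_i)_{i≥1} are i.i.d. copies of X, and let τ_n be the pivot of the projection of d^{(n)} onto the simplex Δ_b ⊆ ℝ^n. Then lim_{n→∞} P(τ_n > t) = 1. -/
open MeasureTheory ProbabilityTheory Filter Finset

/-- Fix `b > 0`, let `X` have an absolutely continuous law with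
`E[X²] < ∞`, and let `t` satisfy `0 < P(X > t) < 1`, so that the conditional expectation
`μ_t = E[X | X > t]` satisfies `μ_t > t`. Let `(d i)` be i.i.d. copies of `X` and for each
`n ≥ 1` let `τ n` be the (random) pivot of the projection of `(d 0, …, d (n−1))` onto
`Δ_b ⊆ ℝ^n`. Then `P(τ n > t) → 1` as `n → ∞`. -/
theorem pivot_exceeds_threshold_tendsto_one
    {Ω : Type*} [MeasureSpace Ω] [IsProbabilityMeasure (ℙ : Measure Ω)]
    (b : ℝ) (hb : 0 < b)
    (X : Ω → ℝ) (hX : Measurable X)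
    (hac : Measure.map X ℙ ≪ volume)
    (hmoment : Integrable (fun ω => X ω ^ 2) ℙ)
    (t : ℝ) (ht0 : 0 < ℙ {ω | t < X ω}) (ht1 : ℙ {ω | t < X ω} < 1)
    (μt : ℝ)
    (hμt : μt = (∫ ω in {ω | t < X ω}, X ω ∂ℙ) / (ℙ {ω | t < X ω}).toReal)
    (d : ℕ → Ω → ℝ) (hmeas : ∀ i, Measurable (d i))
    (hindep : iIndepFun d ℙ)
    (hlaw : ∀ i, Measure.map (d i) ℙ = Measure.map X ℙ)
    (D : ∀ n : ℕ, Ω → EuclideanSpace ℝ (Fin n))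
    (hD : ∀ n ω (i : Fin n), D n ω i = d i ω)
    (v : ∀ n : ℕ, Ω → EuclideanSpace ℝ (Fin n)) (τ : ℕ → Ω → ℝ)
    (hmem : ∀ n, 1 ≤ n → ∀ ω, (∑ i, v n ω i) = b ∧ ∀ i, 0 ≤ v n ω i)
    (hmin : ∀ n, 1 ≤ n → ∀ ω, ∀ w : EuclideanSpace ℝ (Fin n),
      ((∑ i, w i) = b ∧ ∀ i, 0 ≤ w i) → ‖v n ω - D n ω‖ ≤ ‖w - D n ω‖)
    (hτ : ∀ n, 1 ≤ n → ∀ ω, ∀ i : Fin n, v n ω i = max (d i ω - τ n ω) 0) :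
    t < μt ∧
      Tendsto (fun n : ℕ => (ℙ {ω | t < τ n ω}).toReal) atTop (nhds 1) := by
  classical
  set S := {ω | t < X ω} with hS
  have hSm : MeasurableSet S := measurableSet_lt measurable_const hX
  have hXint : Integrable X ℙ := by
    have h2 : MemLp X 2 ℙ := (memLp_two_iff_integrable_sq hX.aestronglyMeasurable).2 hmoment
    exact memLp_one_iff_integrable.1 (h2.mono_exponent (by norm_num))
  have hPS : 0 < (ℙ S).toReal := ENNReal.toReal_pos ht0.ne' (measure_ne_top _ _)
  -- positivity of ∫_S (X - t)
  have hintS : IntegrableOn (fun ω => X ω - t) S ℙ :=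
    (hXint.sub (integrable_const t)).integrableOn
  have hpos : 0 < ∫ ω in S, (X ω - t) ∂ℙ := by
    rw [setIntegral_pos_iff_support_of_nonneg_ae ?_ hintS]
    · refine lt_of_lt_of_le ht0 (measure_mono ?_)
      intro ω hω
      exact ⟨ne_of_gt (sub_pos.2 hω), hω⟩
    · rw [EventuallyLE, ae_restrict_iff' hSm]
      exact Eventually.of_forall fun ω hω => sub_nonneg.2 (le_of_lt hω)
  have hsplit : ∫ ω in S, (X ω - t) ∂ℙ = (∫ ω in S, X ω ∂ℙ) - t * (ℙ S).toReal := by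
    rw [integral_sub hXint.integrableOn (integrable_const t).integrableOn,
      setIntegral_const, smul_eq_mul, mul_comm, measureReal_def]
  have hpart1 : t < μt := by
    rw [hμt, lt_div_iff₀ hPS]
    rw [hsplit] at hpos
    linarith
  refine ⟨hpart1, ?_⟩
  -- the positive parts
  set f : ℝ → ℝ := fun x => max (x - t) 0 with hf
  have hfm : Measurable f := (measurable_id.sub measurable_const).max measurable_const
  set Y : ℕ → Ω → ℝ := fun i ω => f (d i ω) with hY
  have hYm : ∀ i, Measurable (Y i) := fun i => hfm.comp (hmeas i)
  have hident : ∀ i, IdentDistrib (d i) (d 0) ℙ ℙ :=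
    fun i => ⟨(hmeas i).aemeasurable, (hmeas 0).aemeasurable, by rw [hlaw i, hlaw 0]⟩
  have hidX : ∀ i, IdentDistrib (d i) X ℙ ℙ :=
    fun i => ⟨(hmeas i).aemeasurable, hX.aemeasurable, hlaw i⟩
  have hYident : ∀ i, IdentDistrib (Y i) (Y 0) ℙ ℙ :=
    fun i => (hident i).comp hfm
  have hY0int : Integrable (Y 0) ℙ := by
    have : Integrable (fun ω => f (X ω)) ℙ :=
      (hXint.sub (integrable_const t)).pos_part
    exact (((hidX 0).comp hfm).integrable_iff).2 this
  have hYindep : Pairwise (Function.onFun (IndepFun · · ℙ) Y) := fun i j hij =>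
    ((hindep.indepFun hij).comp hfm hfm)
  -- mean is positive
  have hmean : 0 < ∫ ω, Y 0 ω ∂ℙ := by
    rw [integral_pos_iff_support_of_nonneg_ae ?_ hY0int]
    · have hd0 : ℙ {ω | t < d 0 ω} = ℙ S := by
        have h1 : ℙ {ω | t < d 0 ω} = Measure.map (d 0) ℙ (Set.Ioi t) := by
          rw [Measure.map_apply (hmeas 0) measurableSet_Ioi]; rfl
        have h2 : ℙ S = Measure.map X ℙ (Set.Ioi t) := by
          rw [Measure.map_apply hX measurableSet_Ioi]; rfl
        rw [h1, h2, hlaw 0]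
      rw [← hd0] at ht0
      refine lt_of_lt_of_le ht0 (measure_mono ?_)
      intro ω (hω : t < d 0 ω)
      simp only [Function.mem_support, hY, hf]
      have : (0:ℝ) < d 0 ω - t := sub_pos.2 hω
      simp [max_eq_left (le_of_lt this)]
      linarith
    · exact Eventually.of_forall fun ω => le_max_right _ _
  -- strong law
  have hsll := strong_law_ae_real Y hY0int hYindep hYident
  -- sets
  set A : ℕ → Set Ω := fun n => {ω | b < ∑ i ∈ range n, Y i ω} with hA
  have hAm : ∀ n, MeasurableSet (A n) := fun n =>
    measurableSet_lt measurable_const (Finset.measurable_sum _ fun i _ => hYm i)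
  have hYnn : ∀ i ω, 0 ≤ Y i ω := fun i ω => le_max_right _ _
  have hAmono : Monotone A := by
    intro m n hmn ω hω
    refine lt_of_lt_of_le hω (Finset.sum_le_sum_of_subset_of_nonneg
      (Finset.range_subset_range.2 hmn) fun i _ _ => hYnn i ω)
  -- a.s. eventually in A n
  have hae : ∀ᵐ ω ∂ℙ, ω ∈ ⋃ n, A n := by
    filter_upwards [hsll] with ω hω
    have htop : Tendsto (fun n : ℕ => ∑ i ∈ range n, Y i ω) atTop atTop := by
      have h1 : Tendsto (fun n : ℕ => (n : ℝ) * ((∑ i ∈ range n, Y i ω) / n)) atTop atTop :=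
        Tendsto.atTop_mul_pos hmean tendsto_natCast_atTop_atTop hω
      refine h1.congr' ?_
      filter_upwards [eventually_gt_atTop 0] with n hn
      field_simp
    rcases (htop.eventually_gt_atTop b).exists with ⟨n, hn⟩
    exact Set.mem_iUnion.2 ⟨n, hn⟩
  have hU : ℙ (⋃ n, A n) = 1 := by
    rw [← measure_univ (μ := (ℙ : Measure Ω))]
    apply measure_congr
    rw [Filter.eventuallyEq_set]
    filter_upwards [hae] with ω hω
    simp [hω]
  have hAten : Tendsto (fun n => ℙ (A n)) atTop (nhds 1) := by
    rw [← hU]; exact tendsto_measure_iUnion_atTop hAmono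
  have hAtoReal : Tendsto (fun n => (ℙ (A n)).toReal) atTop (nhds 1) := by
    have := (ENNReal.tendsto_toReal ENNReal.one_ne_top).comp hAten
    exact this
  -- inclusion A n ⊆ {t < τ n} for n ≥ 1
  have hincl : ∀ n, 1 ≤ n → A n ⊆ {ω | t < τ n ω} := by
    intro n hn ω hω
    by_contra hc
    simp only [Set.mem_setOf_eq, not_lt] at hc
    have hsum : (∑ i : Fin n, v n ω i) = b := (hmem n hn ω).1
    have hle : ∀ i : Fin n, Y (i : ℕ) ω ≤ v n ω i := by
      intro i
      rw [hτ n hn ω i]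
      exact max_le_max (sub_le_sub_left hc _) le_rfl
    have : (∑ i ∈ range n, Y i ω) ≤ b := by
      calc (∑ i ∈ range n, Y i ω) = ∑ i : Fin n, Y (i : ℕ) ω :=
            (Fin.sum_univ_eq_sum_range (fun i => Y i ω) n).symm
        _ ≤ ∑ i : Fin n, v n ω i := Finset.sum_le_sum fun i _ => hle i
        _ = b := hsum
    exact absurd hω (not_lt.2 this)
  -- squeeze
  refine tendsto_of_tendsto_of_tendsto_of_le_of_le' hAtoReal tendsto_const_nhds ?_ ?_
  · filter_upwards [eventually_ge_atTop 1] with n hn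
    exact ENNReal.toReal_mono (measure_ne_top _ _) (measure_mono (hincl n hn))
  · filter_upwards with n
    simpa using ENNReal.toReal_mono ENNReal.one_ne_top (prob_le_one (μ := (ℙ : Measure Ω)))
end

section
/- Let n ≥ 1, d ∈ ℝ^n and b > 0 with Σ_{i=1}^n |d_i| > b, and let τ be the pivot of the projection of the vector |d| = (|d_1|,…,|d_n|) onto the simplex Δ_b ⊆ ℝ^n. Then τ ≥ (Σ_{i=1}^n |d_i| − b)/n > 0, and consequently for every index i with d_i = 0 the i-th coordinate of proj_{Δ_b}(|d|) equals 0. -/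
/-- Let `n ≥ 1`, `d ∈ ℝ^n` and `b > 0` with `∑ i, |d i| > b`, and let `τ` be
the pivot of the projection `v` of the vector `(|d 1|, …, |d n|)` onto the simplex
`Δ_b ⊆ ℝ^n`. Then `τ ≥ (∑ i, |d i| − b)/n > 0`, and consequently for every index `i` with
`d i = 0`, the `i`-th coordinate of the projection is `0`. -/
theorem abs_vector_projection_zero_entries
    (n : ℕ) (hn : 1 ≤ n) (b : ℝ) (hb : 0 < b)
    (d : EuclideanSpace ℝ (Fin n)) (hd : b < ∑ i, |d i|)
    (a : EuclideanSpace ℝ (Fin n)) (ha : ∀ i, a i = |d i|)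
    (v : EuclideanSpace ℝ (Fin n))
    (hmem : (∑ i, v i) = b ∧ ∀ i, 0 ≤ v i)
    (hmin : ∀ w : EuclideanSpace ℝ (Fin n),
      ((∑ i, w i) = b ∧ ∀ i, 0 ≤ w i) → ‖v - a‖ ≤ ‖w - a‖)
    (τ : ℝ) (hτ : ∀ i, v i = max (a i - τ) 0) :
    ((∑ i, |d i|) - b) / (n : ℝ) ≤ τ ∧ 0 < ((∑ i, |d i|) - b) / (n : ℝ) ∧
      ∀ i, d i = 0 → v i = 0 := by
  have hnpos : (0 : ℝ) < n := by exact_mod_cast hn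
  have h1 : ∑ i, (a i - τ) ≤ ∑ i, v i := by
    apply Finset.sum_le_sum
    intro i _
    rw [hτ i]; exact le_max_left _ _
  have hsa : ∑ i, (a i - τ) = (∑ i, |d i|) - n * τ := by
    simp [Finset.sum_sub_distrib, ha, mul_comm]
  rw [hsa, hmem.1] at h1
  have hle : ((∑ i, |d i|) - b) / (n : ℝ) ≤ τ := by
    rw [div_le_iff₀ hnpos]; linarith
  have hpos : 0 < ((∑ i, |d i|) - b) / (n : ℝ) := div_pos (by linarith) hnpos
  refine ⟨hle, hpos, fun i hi => ?_⟩
  have : τ > 0 := lt_of_lt_of_le hpos hle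
  rw [hτ i, ha i, hi]
  simp [abs_of_nonneg, le_of_lt this]
end
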